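/- arXiv:2602.06713 — 4 statements merged into one kernel-verified Lean document; each statement's English description precedes it below -/
import Mathlib

section
/- Fix a coordinate i with 0 < P(R_i = 0) < 1. Under the MAR assumption, for any deterministic imputation map g preserving observed entries, the conditional expected squared imputation error is invariant to the value of R_i: E[ (g_i(X̃) − X_i)² | X_obs, R_{¬i}, R_i = 0 ] = E[ (g_i(X̃) − X_i)² | X_obs, R_{¬i}, R_i = 1 ] almost surely on the event where both conditionings are well-defined. -/
open MeasureTheory ProbabilityTheory
open scoped ProbabilityTheory ENNReal

private lemma sInf_image_rat_gt (r : ℝ) :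
    sInf ((fun q : ℚ => (q : ℝ)) '' {q : ℚ | r < (q : ℝ)}) = r := by
  have hne : ((fun q : ℚ => (q : ℝ)) '' {q : ℚ | r < (q : ℝ)}).Nonempty := by
    obtain ⟨q, hq⟩ := exists_rat_gt r
    exact ⟨q, ⟨q, hq, rfl⟩⟩
  have hbdd : BddBelow ((fun q : ℚ => (q : ℝ)) '' {q : ℚ | r < (q : ℝ)}) := by
    refine ⟨r, ?_⟩
    rintro x ⟨p, hp, rfl⟩
    exact le_of_lt hp
  refine le_antisymm ?_ (le_csInf hne ?_)
  · refine le_of_forall_pos_le_add fun ε hε => ?_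
    obtain ⟨q, hq1, hq2⟩ := exists_rat_btwn (lt_add_of_pos_right r hε)
    exact (csInf_le hbdd ⟨q, hq1, rfl⟩).trans hq2.le
  · rintro x ⟨p, hp, rfl⟩
    exact hp.le

private lemma exists_measurable_factor {Ω γ : Type*} [MeasurableSpace Ω] [MeasurableSpace γ]
    (Z : Ω → γ) (ψ : Ω → ℝ)
    (hψ : Measurable[MeasurableSpace.comap Z inferInstance] ψ) :
    ∃ φ : γ → ℝ, Measurable φ ∧ ∀ ω, φ (Z ω) = ψ ω := by
  classical
  have h : ∀ q : ℚ, ∃ t : Set γ, MeasurableSet t ∧ Z ⁻¹' t = ψ ⁻¹' Set.Iio (q : ℝ) :=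
    fun q => hψ (measurableSet_Iio (a := (q : ℝ)))
  choose t ht hZt using h
  set t' : ℚ → Set γ := fun q => ⋃ (p : ℚ) (_ : p ≤ q), t p with ht'def
  have ht' : ∀ q, MeasurableSet (t' q) := fun q =>
    MeasurableSet.iUnion fun p => MeasurableSet.iUnion fun _ => ht p
  have ht'mono : ∀ {p q : ℚ}, p ≤ q → t' p ⊆ t' q := by
    intro p q hpq y hy
    simp only [ht'def, Set.mem_iUnion] at hy ⊢
    obtain ⟨r, hr, hyr⟩ := hy
    exact ⟨r, hr.trans hpq, hyr⟩
  have hmem : ∀ (ω) (q : ℚ), Z ω ∈ t' q ↔ ψ ω < (q : ℝ) := by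
    intro ω q
    simp only [ht'def, Set.mem_iUnion]
    constructor
    · rintro ⟨p, hpq, hyp⟩
      have h2 : ω ∈ Z ⁻¹' t p := hyp
      rw [hZt p] at h2
      exact lt_of_lt_of_le h2 (by exact_mod_cast hpq)
    · intro hlt
      refine ⟨q, le_rfl, ?_⟩
      have h2 : ω ∈ ψ ⁻¹' Set.Iio (q : ℝ) := hlt
      rw [← hZt q] at h2
      exact h2
  set G : Set γ := (⋃ q : ℚ, t' q) ∩ (⋂ q : ℚ, t' q)ᶜ with hGdef
  have hG : MeasurableSet G :=
    (MeasurableSet.iUnion ht').inter (MeasurableSet.iInter ht').compl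
  set φ : γ → ℝ := fun y =>
    if y ∈ G then sInf ((fun q : ℚ => (q : ℝ)) '' {q : ℚ | y ∈ t' q}) else 0 with hφdef
  have hZG : ∀ ω, Z ω ∈ G := by
    intro ω
    constructor
    · obtain ⟨q, hq⟩ := exists_rat_gt (ψ ω)
      exact Set.mem_iUnion.2 ⟨q, (hmem ω q).2 hq⟩
    · intro hI
      obtain ⟨q, hq⟩ := exists_rat_lt (ψ ω)
      exact absurd ((hmem ω q).1 (Set.mem_iInter.1 hI q)) (not_lt.2 hq.le)
  refine ⟨φ, ?_, ?_⟩
  · apply measurable_of_Iio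
    intro a
    have hset : φ ⁻¹' Set.Iio a =
        (if (0:ℝ) < a then Gᶜ else ∅) ∪ (G ∩ ⋃ (q : ℚ) (_ : (q : ℝ) < a), t' q) := by
      ext y
      by_cases hy : y ∈ G
      · have hSne : {q : ℚ | y ∈ t' q}.Nonempty := by
          obtain ⟨s, hs⟩ := Set.mem_iUnion.1 hy.1
          exact ⟨s, hs⟩
        obtain ⟨q0, hq0⟩ : ∃ q0 : ℚ, y ∉ t' q0 := by
          by_contra hcon
          push_neg at hcon
          exact hy.2 (Set.mem_iInter.2 hcon)
        have hbdd : BddBelow ((fun q : ℚ => (q : ℝ)) '' {q : ℚ | y ∈ t' q}) := by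
          refine ⟨(q0 : ℝ), ?_⟩
          rintro x ⟨p, hp, rfl⟩
          by_contra hlt
          push_neg at hlt
          have hpq : p ≤ q0 := by exact_mod_cast hlt.le
          exact hq0 (ht'mono hpq hp)
        have himg : ((fun q : ℚ => (q : ℝ)) '' {q : ℚ | y ∈ t' q}).Nonempty :=
          hSne.image _
        simp only [Set.mem_preimage, Set.mem_Iio, hφdef, if_pos hy, Set.mem_union,
          Set.mem_inter_iff, Set.mem_iUnion]
        constructor
        · intro hlt
          obtain ⟨x, ⟨p, hp, rfl⟩, hxa⟩ := exists_lt_of_csInf_lt himg hlt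
          exact Or.inr ⟨hy, ⟨p, hxa, hp⟩⟩
        · rintro (hmem' | ⟨-, p, hpa, hyp⟩)
          · exfalso
            split_ifs at hmem' with h'
            · exact hmem' hy
            · exact hmem'
          · exact lt_of_le_of_lt (csInf_le hbdd ⟨p, hyp, rfl⟩) hpa
      · simp only [Set.mem_preimage, Set.mem_Iio, hφdef, if_neg hy, Set.mem_union,
          Set.mem_inter_iff, Set.mem_iUnion]
        constructor
        · intro ha
          left
          rw [if_pos ha]
          exact hy
        · rintro (hmem' | ⟨hyG, -⟩)
          · split_ifs at hmem' with h'
            · exact h'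
            · exact hmem'.elim
          · exact absurd hyG hy
    rw [hset]
    refine MeasurableSet.union ?_
      (hG.inter (MeasurableSet.iUnion fun q => MeasurableSet.iUnion fun _ => ht' q))
    split_ifs
    exacts [hG.compl, MeasurableSet.empty]
  · intro ω
    have hmemG := hZG ω
    simp only [hφdef, if_pos hmemG]
    have hseteq : {q : ℚ | Z ω ∈ t' q} = {q : ℚ | ψ ω < (q : ℝ)} := by
      ext q
      exact hmem ω q
    rw [hseteq, sInf_image_rat_gt]

private def mz {Ω γ : Type*} [MeasurableSpace γ] (Z : Ω → γ) : MeasurableSpace Ω :=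
  MeasurableSpace.comap Z inferInstance

private def mn {Ω γ : Type*} [MeasurableSpace γ] (Z : Ω → γ) (Xi : Ω → ℝ) :
    MeasurableSpace Ω :=
  mz Z ⊔ MeasurableSpace.comap Xi inferInstance

private noncomputable def ind {α : Type*} (E : Set α) : α → ℝ := E.indicator fun _ => 1

private lemma ind_nonneg {α : Type*} (E : Set α) (x : α) : 0 ≤ ind E x :=
  Set.indicator_nonneg (fun _ _ => zero_le_one) x

private lemma ind_le_one {α : Type*} (E : Set α) (x : α) : ind E x ≤ 1 := by
  by_cases hx : x ∈ E <;> simp [ind, Set.indicator_apply, hx]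

private lemma norm_ind_le_one {α : Type*} (E : Set α) (x : α) : ‖ind E x‖ ≤ 1 := by
  rw [Real.norm_eq_abs, abs_le]
  exact ⟨by linarith [ind_nonneg E x], ind_le_one E x⟩

private lemma ind_stronglyMeasurable {α : Type*} {mα : MeasurableSpace α} {E : Set α}
    (hE : MeasurableSet E) : MeasureTheory.StronglyMeasurable (ind E) :=
  MeasureTheory.stronglyMeasurable_const.indicator hE

private lemma ind_integrable {α : Type*} {mα : MeasurableSpace α} {μ : MeasureTheory.Measure α}
    [MeasureTheory.IsFiniteMeasure μ] {E : Set α} (hE : MeasurableSet E) :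
    MeasureTheory.Integrable (ind E) μ :=
  (MeasureTheory.integrable_const (1:ℝ)).indicator hE

private lemma mul_ind_apply {α : Type*} (E : Set α) (g : α → ℝ) (x : α) :
    g x * ind E x = E.indicator g x := by
  by_cases hx : x ∈ E <;> simp [ind, Set.indicator_apply, hx]

private lemma integrable_mul_ind {α : Type*} {mα : MeasurableSpace α}
    {μ : MeasureTheory.Measure α} {g : α → ℝ} (hg : MeasureTheory.Integrable g μ) {E : Set α}
    (hE : MeasurableSet E) : MeasureTheory.Integrable (fun x => g x * ind E x) μ := by
  have h := hg.bdd_mul ((ind_stronglyMeasurable hE).aestronglyMeasurable)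
    (Filter.Eventually.of_forall fun x => norm_ind_le_one E x)
  exact h.congr (Filter.Eventually.of_forall fun x => mul_comm _ _)

private lemma setint_mul_ind {α : Type*} {mα : MeasurableSpace α}
    {μ : MeasureTheory.Measure α} {E : Set α} (hE : MeasurableSet E) (s : Set α) (g : α → ℝ) :
    ∫ x in s, g x * ind E x ∂μ = ∫ x in s ∩ E, g x ∂μ := by
  rw [← MeasureTheory.setIntegral_indicator hE]
  exact MeasureTheory.integral_congr_ae
    (Filter.Eventually.of_forall fun x => mul_ind_apply E g x)

private lemma setint_ind {α : Type*} {mα : MeasurableSpace α}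
    {μ : MeasureTheory.Measure α} {E : Set α} (hE : MeasurableSet E) (s : Set α) :
    ∫ x in s, ind E x ∂μ = (μ (s ∩ E)).toReal := by
  show ∫ x in s, E.indicator (fun _ => (1:ℝ)) x ∂μ = (μ (s ∩ E)).toReal
  rw [MeasureTheory.setIntegral_indicator hE]
  simp
  rfl

/-- Fix a coordinate `i` with `0 < P(Rᵢ = 0) < 1`. Under the MAR assumption
(conditional independence of `Xᵢ` and `Rᵢ` given `Z = (X_obs, R_{¬i})`), for any deterministic
imputation map whose `i`-th coordinate `gᵢ` depends on the masked vector through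
`Z = (X_obs, R_{¬i})`, the conditional expected squared imputation error is invariant to the
value of `Rᵢ`: there is a single measurable function `φ` of `(X_obs, R_{¬i})` which is a
version of `E[(gᵢ(X̃) − Xᵢ)² | X_obs, R_{¬i}]` both under conditioning on `{Rᵢ = 0}` and under
conditioning on `{Rᵢ = 1}` (i.e. the two conditional expectations agree a.s. wherever both are
defined). -/
theorem conditional_sq_error_invariant_under_MAR
    {Ω γ : Type*} [MeasureSpace Ω] [IsProbabilityMeasure (ℙ : Measure Ω)]
    [StandardBorelSpace Ω] [Nonempty Ω] [MeasurableSpace γ]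
    (Xi : Ω → ℝ)             -- the i-th coordinate of the data vector
    (Ri : Ω → ℝ)             -- the i-th missingness indicator (1 = observed, 0 = missing)
    (Z : Ω → γ)              -- the pair (X_obs, R_{¬i})
    (gi : γ → ℝ)             -- i-th coordinate of the imputation map, a function of (X_obs, R_{¬i})
    (hXi : Measurable Xi) (hRi : Measurable Ri) (hZ : Measurable Z) (hgi : Measurable gi)
    (hRval : ∀ ω, Ri ω = 0 ∨ Ri ω = 1)
    (h0 : 0 < ℙ {ω | Ri ω = 0}) (h1 : ℙ {ω | Ri ω = 0} < 1)
    -- MAR: conditionally on (X_obs, R_{¬i}), the law of Xᵢ is the same on {Rᵢ=0} and {Rᵢ=1}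
    (hMAR : CondIndepFun (MeasurableSpace.comap Z inferInstance) hZ.comap_le Xi Ri ℙ)
    -- the squared error is integrable
    (hint : Integrable (fun ω => (gi (Z ω) - Xi ω) ^ 2) ℙ) :
    ∃ φ : γ → ℝ, Measurable φ ∧
      ((ℙ[|{ω | Ri ω = 0}])[fun ω => (gi (Z ω) - Xi ω) ^ 2 |
          MeasurableSpace.comap Z inferInstance]
        =ᵐ[ℙ[|{ω | Ri ω = 0}]] fun ω => φ (Z ω)) ∧
      ((ℙ[|{ω | Ri ω = 1}])[fun ω => (gi (Z ω) - Xi ω) ^ 2 |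
          MeasurableSpace.comap Z inferInstance]
        =ᵐ[ℙ[|{ω | Ri ω = 1}]] fun ω => φ (Z ω)) := by
  classical
  set f : Ω → ℝ := fun ω => (gi (Z ω) - Xi ω) ^ 2 with hf_def
  have hm : mz Z ≤ MeasureSpace.toMeasurableSpace := hZ.comap_le
  have hn : mn Z Xi ≤ MeasureSpace.toMeasurableSpace := sup_le hZ.comap_le hXi.comap_le
  have hmn : mz Z ≤ mn Z Xi := le_sup_left
  have hZm : Measurable[mz Z] Z := fun s hs => ⟨s, hs, rfl⟩
  have hZn : Measurable[mn Z Xi] Z := hZm.mono hmn le_rfl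
  have hXimX : Measurable[MeasurableSpace.comap Xi inferInstance] Xi :=
    fun s hs => ⟨s, hs, rfl⟩
  have hXin : Measurable[mn Z Xi] Xi := hXimX.mono le_sup_right le_rfl
  have hfn : Measurable[mn Z Xi] f := ((hgi.comp hZn).sub hXin).pow_const 2
  -- the sets
  set A : Set Ω := {ω | Ri ω = 0} with hA_def
  have hAmeas : MeasurableSet A := hRi (measurableSet_singleton (0:ℝ))
  have hA_eq : A = Ri ⁻¹' {0} := by ext ω; simp [hA_def]
  have hA1c : {ω | Ri ω = 1} = Aᶜ := by
    ext ω
    simp only [Set.mem_setOf_eq, Set.mem_compl_iff, hA_def]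
    constructor
    · intro h h'
      rw [h'] at h
      norm_num at h
    · intro h
      rcases hRval ω with h' | h'
      · exact absurd h' h
      · exact h'
  have hA0 : ℙ A ≠ 0 := h0.ne'
  have hAc0 : ℙ Aᶜ ≠ 0 := by
    rw [measure_compl hAmeas (measure_ne_top _ _), measure_univ]
    intro h
    exact absurd (tsub_eq_zero_iff_le.mp h) (not_le.mpr h1)
  -- conditional expectations
  set q : Ω → ℝ := ℙ[ind A|mz Z] with hq_def
  set ψ : Ω → ℝ := ℙ[f|mz Z] with hψ_def
  have hψm : StronglyMeasurable[mz Z] ψ := stronglyMeasurable_condExp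
  obtain ⟨φ, hφ, hφψ⟩ := exists_measurable_factor Z ψ hψm.measurable
  have hq_int : Integrable q ℙ := integrable_condExp
  have hψ_int : Integrable ψ ℙ := integrable_condExp
  have hindA_int : Integrable (ind A) ℙ := ind_integrable hAmeas
  -- conditional independence: E[1_{D ∩ A} | mz Z] = E[1_D | mz Z] * E[1_A | mz Z]
  have hCI : ∀ D : Set Ω, MeasurableSet[MeasurableSpace.comap Xi inferInstance] D →
      ℙ[ind (D ∩ A)|mz Z] =ᵐ[ℙ] fun ω => (ℙ[ind D|mz Z]) ω * q ω := by
    intro D hD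
    obtain ⟨u, hu, hDu⟩ := hD
    have h := (condIndepFun_iff_condExp_inter_preimage_eq_mul (m' := mz Z)
        (hm' := hZ.comap_le) hXi hRi).mp hMAR u {0} hu (measurableSet_singleton (0:ℝ))
    have hDA : D ∩ A = Xi ⁻¹' u ∩ Ri ⁻¹' {0} := by rw [← hDu, ← hA_eq]
    have hq_eq : q = ℙ[ind (Ri ⁻¹' {0})|mz Z] := by rw [hq_def, hA_eq]
    rw [show ind (D ∩ A) = Set.indicator (Xi ⁻¹' u ∩ Ri ⁻¹' {0}) (fun _ => (1:ℝ)) by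
          rw [← hDA]; rfl,
        show ind D = Set.indicator (Xi ⁻¹' u) (fun _ => (1:ℝ)) by rw [← hDu]; rfl,
        hq_eq]
    exact h
  -- Step 2 : E[1_A | mn Z Xi] = E[1_A | mz Z]  (tower property via π-system argument)
  have hbase : ∀ s : Set Ω, MeasurableSet[mn Z Xi] s →
      ∫ x in s, q x ∂ℙ = ∫ x in s, ind A x ∂ℙ := by
    set S : Set (Set Ω) := {s | ∃ B D, MeasurableSet[mz Z] B ∧
      MeasurableSet[MeasurableSpace.comap Xi inferInstance] D ∧ s = B ∩ D} with hS_def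
    have hSpi : IsPiSystem S := by
      rintro s1 ⟨B₁, D₁, hB₁, hD₁, rfl⟩ s2 ⟨B₂, D₂, hB₂, hD₂, rfl⟩ -
      refine ⟨B₁ ∩ B₂, D₁ ∩ D₂, hB₁.inter hB₂, hD₁.inter hD₂, ?_⟩
      ext x
      simp only [Set.mem_inter_iff]
      tauto
    have hgen : mn Z Xi = MeasurableSpace.generateFrom S := by
      refine le_antisymm (sup_le ?_ ?_) (MeasurableSpace.generateFrom_le ?_)
      · intro s hs
        exact MeasurableSpace.measurableSet_generateFrom
          ⟨s, Set.univ, hs, MeasurableSet.univ, (Set.inter_univ s).symm⟩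
      · intro s hs
        exact MeasurableSpace.measurableSet_generateFrom
          ⟨Set.univ, s, MeasurableSet.univ, hs, (Set.univ_inter s).symm⟩
      · rintro s ⟨B, D, hB, hD, rfl⟩
        exact MeasurableSet.inter (hmn _ hB)
          ((le_sup_right : MeasurableSpace.comap Xi inferInstance ≤ mn Z Xi) _ hD)
    refine MeasurableSpace.induction_on_inter (m := mn Z Xi) (C := fun s _ =>
        ∫ x in s, q x ∂ℙ = ∫ x in s, ind A x ∂ℙ) (s := S) hgen hSpi (by simp) ?_ ?_ ?_
    · -- base case : s = B ∩ D
      rintro s ⟨B, D, hB, hD, rfl⟩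
      have hB0 : MeasurableSet B := hm _ hB
      have hD0 : MeasurableSet D := hXi.comap_le _ hD
      have hDA_meas : MeasurableSet (D ∩ A) := hD0.inter hAmeas
      have hqD_int : Integrable (fun x => q x * ind D x) ℙ := integrable_mul_ind hq_int hD0
      have hindD_int : Integrable (ind D) ℙ := ind_integrable hD0
      have hindDA_int : Integrable (ind (D ∩ A)) ℙ := ind_integrable hDA_meas
      have hpull : ℙ[fun x => q x * ind D x|mz Z] =ᵐ[ℙ]
          fun x => q x * (ℙ[ind D|mz Z]) x := by
        have h := condExp_mul_of_stronglyMeasurable_left (m := mz Z) (μ := ℙ)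
          (f := q) (g := ind D) stronglyMeasurable_condExp hqD_int hindD_int
        exact h
      calc ∫ x in B ∩ D, q x ∂ℙ
          = ∫ x in B, q x * ind D x ∂ℙ := (setint_mul_ind hD0 B q).symm
        _ = ∫ x in B, (ℙ[fun x => q x * ind D x|mz Z]) x ∂ℙ :=
            (setIntegral_condExp hm hqD_int hB).symm
        _ = ∫ x in B, q x * (ℙ[ind D|mz Z]) x ∂ℙ :=
            setIntegral_congr_ae hB0 (hpull.mono fun x hx _ => hx)
        _ = ∫ x in B, (ℙ[ind (D ∩ A)|mz Z]) x ∂ℙ := by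
            refine setIntegral_congr_ae hB0 (((hCI D hD).mono ?_))
            intro x hx _
            rw [hx, mul_comm]
        _ = ∫ x in B, ind (D ∩ A) x ∂ℙ := setIntegral_condExp hm hindDA_int hB
        _ = (ℙ (B ∩ (D ∩ A))).toReal := setint_ind hDA_meas B
        _ = (ℙ ((B ∩ D) ∩ A)).toReal := by rw [Set.inter_assoc]
        _ = ∫ x in B ∩ D, ind A x ∂ℙ := (setint_ind hAmeas (B ∩ D)).symm
    · -- complement
      intro t htn ht
      have ht0 : MeasurableSet t := hn _ htn
      have h1' := integral_add_compl ht0 hq_int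
      have h2' := integral_add_compl ht0 hindA_int
      have h3' : ∫ x, q x ∂ℙ = ∫ x, ind A x ∂ℙ := integral_condExp hm
      linarith
    · -- disjoint unions
      intro g hdisj hgn hg
      have hg0 : ∀ i, MeasurableSet (g i) := fun i => hn _ (hgn i)
      rw [integral_iUnion hg0 hdisj hq_int.integrableOn,
        integral_iUnion hg0 hdisj hindA_int.integrableOn]
      exact tsum_congr hg
  have htower : ℙ[ind A|mn Z Xi] =ᵐ[ℙ] q := by
    refine (ae_eq_condExp_of_forall_setIntegral_eq hn hindA_int
      (fun s _ _ => hq_int.integrableOn) (fun s hs _ => hbase s hs) ?_).symm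
    exact (stronglyMeasurable_condExp.mono hmn).aestronglyMeasurable
  have htowerc : ℙ[ind Aᶜ|mn Z Xi] =ᵐ[ℙ] ℙ[ind Aᶜ|mz Z] := by
    have hsub : ind Aᶜ = (fun _ => (1:ℝ)) - ind A := by
      funext x
      by_cases hx : x ∈ A <;> simp [ind, Set.indicator_apply, hx]
    have hone : ∀ k : MeasurableSpace Ω, k ≤ MeasureSpace.toMeasurableSpace →
        ℙ[ind Aᶜ|k] =ᵐ[ℙ] (fun _ => (1:ℝ)) - ℙ[ind A|k] := by
      intro k hk
      rw [hsub]
      have h := condExp_sub (m := k) (μ := ℙ) (integrable_const (1:ℝ)) hindA_int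
      refine h.trans ?_
      rw [condExp_const hk (1:ℝ)]
    refine (hone _ hn).trans (Filter.EventuallyEq.trans ?_ ((hone _ hm).symm))
    filter_upwards [htower] with x hx
    simp [hx, hq_def]
  -- main claim
  have claim : ∀ E : Set Ω, MeasurableSet E → ℙ E ≠ 0 →
      (ℙ[ind E|mn Z Xi] =ᵐ[ℙ] ℙ[ind E|mz Z]) →
      (ℙ[|E])[f|mz Z] =ᵐ[ℙ[|E]] fun ω => φ (Z ω) := by
    intro E hE hE0 hEcond
    haveI : IsProbabilityMeasure (ℙ[|E]) := cond_isProbabilityMeasure hE0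
    have hinv_ne_top : (ℙ E)⁻¹ ≠ ∞ := ENNReal.inv_ne_top.mpr hE0
    have hcond_eq : (ℙ[|E]) = (ℙ E)⁻¹ • (ℙ : Measure Ω).restrict E := rfl
    set qE : Ω → ℝ := ℙ[ind E|mz Z] with hqE_def
    have hindE_int : Integrable (ind E) ℙ := ind_integrable hE
    have hqE_int : Integrable qE ℙ := integrable_condExp
    have hqE0 : 0 ≤ᵐ[ℙ] qE :=
      condExp_nonneg (Filter.Eventually.of_forall fun x => ind_nonneg E x)
    have hqE1 : qE ≤ᵐ[ℙ] fun _ => (1:ℝ) := by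
      have h := condExp_mono (m := mz Z) (μ := ℙ) hindE_int (integrable_const (1:ℝ))
        (Filter.Eventually.of_forall fun x => ind_le_one E x)
      rwa [condExp_const hm (1:ℝ)] at h
    have hqE_bnd : ∀ᵐ x ∂ℙ, ‖qE x‖ ≤ 1 := by
      filter_upwards [hqE0, hqE1] with x hx0 hx1
      rw [Real.norm_eq_abs, abs_le]
      have hx0' : (0:ℝ) ≤ qE x := hx0
      exact ⟨by linarith, hx1⟩
    have hqE_meas : AEStronglyMeasurable qE ℙ :=
      (stronglyMeasurable_condExp.mono hm).aestronglyMeasurable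
    -- integrability facts
    have hfψE_int : Integrable (fun x => ψ x * ind E x) ℙ := integrable_mul_ind hψ_int hE
    have hffE_int : Integrable (fun x => f x * ind E x) ℙ := integrable_mul_ind hint hE
    have hqEf_int : Integrable (fun x => qE x * f x) ℙ := hint.bdd_mul hqE_meas hqE_bnd
    -- pull-out identities
    have hpull1 : ℙ[fun x => ψ x * ind E x|mz Z] =ᵐ[ℙ] fun x => ψ x * qE x :=
      condExp_mul_of_stronglyMeasurable_left (m := mz Z) (μ := ℙ) (f := ψ) (g := ind E)
        stronglyMeasurable_condExp hfψE_int hindE_int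
    have hpull2 : ℙ[fun x => f x * ind E x|mn Z Xi] =ᵐ[ℙ]
        fun x => f x * (ℙ[ind E|mn Z Xi]) x :=
      condExp_mul_of_stronglyMeasurable_left (m := mn Z Xi) (μ := ℙ) (f := f) (g := ind E)
        hfn.stronglyMeasurable hffE_int hindE_int
    have hpull3 : ℙ[fun x => qE x * f x|mz Z] =ᵐ[ℙ] fun x => qE x * ψ x :=
      condExp_mul_of_stronglyMeasurable_left (m := mz Z) (μ := ℙ) (f := qE) (g := f)
        stronglyMeasurable_condExp hqEf_int hint
    -- the main set-integral identity over ℙ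
    have hmain : ∀ s : Set Ω, MeasurableSet[mz Z] s →
        ∫ x in s ∩ E, ψ x ∂ℙ = ∫ x in s ∩ E, f x ∂ℙ := by
      intro s hs
      have hs0 : MeasurableSet s := hm _ hs
      have hsn : MeasurableSet[mn Z Xi] s := hmn _ hs
      have lhs_eq : ∫ x in s ∩ E, ψ x ∂ℙ = ∫ x in s, qE x * ψ x ∂ℙ := by
        calc ∫ x in s ∩ E, ψ x ∂ℙ
            = ∫ x in s, ψ x * ind E x ∂ℙ := (setint_mul_ind hE s ψ).symm
          _ = ∫ x in s, (ℙ[fun x => ψ x * ind E x|mz Z]) x ∂ℙ :=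
              (setIntegral_condExp hm hfψE_int hs).symm
          _ = ∫ x in s, ψ x * qE x ∂ℙ :=
              setIntegral_congr_ae hs0 (hpull1.mono fun x hx _ => hx)
          _ = ∫ x in s, qE x * ψ x ∂ℙ :=
              integral_congr_ae (Filter.Eventually.of_forall fun x => mul_comm _ _)
      have rhs_eq : ∫ x in s ∩ E, f x ∂ℙ = ∫ x in s, qE x * ψ x ∂ℙ := by
        calc ∫ x in s ∩ E, f x ∂ℙ
            = ∫ x in s, f x * ind E x ∂ℙ := (setint_mul_ind hE s f).symm
          _ = ∫ x in s, (ℙ[fun x => f x * ind E x|mn Z Xi]) x ∂ℙ :=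
              (setIntegral_condExp hn hffE_int hsn).symm
          _ = ∫ x in s, f x * (ℙ[ind E|mn Z Xi]) x ∂ℙ :=
              setIntegral_congr_ae hs0 (hpull2.mono fun x hx _ => hx)
          _ = ∫ x in s, qE x * f x ∂ℙ := by
              refine setIntegral_congr_ae hs0 (hEcond.mono fun x hx _ => ?_)
              rw [hx, mul_comm]
          _ = ∫ x in s, (ℙ[fun x => qE x * f x|mz Z]) x ∂ℙ :=
              (setIntegral_condExp hm hqEf_int hs).symm
          _ = ∫ x in s, qE x * ψ x ∂ℙ :=
              setIntegral_congr_ae hs0 (hpull3.mono fun x hx _ => hx)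
      rw [lhs_eq, rhs_eq]
    -- transfer to the conditional measure
    have hint_cond : Integrable f (ℙ[|E]) := by
      rw [hcond_eq]
      exact (hint.restrict (s := E)).smul_measure hinv_ne_top
    have hψ_cond : Integrable ψ (ℙ[|E]) := by
      rw [hcond_eq]
      exact (hψ_int.restrict (s := E)).smul_measure hinv_ne_top
    have hφZ_cond : Integrable (fun ω => φ (Z ω)) (ℙ[|E]) := by
      refine hψ_cond.congr (Filter.Eventually.of_forall fun x => ?_)
      exact (hφψ x).symm
    have hg_eq : ∀ s : Set Ω, MeasurableSet[mz Z] s → (ℙ[|E]) s < ∞ →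
        ∫ x in s, φ (Z x) ∂(ℙ[|E]) = ∫ x in s, f x ∂(ℙ[|E]) := by
      intro s hs _
      have hs0 : MeasurableSet s := hm _ hs
      have hres : (ℙ[|E]).restrict s = (ℙ E)⁻¹ • (ℙ : Measure Ω).restrict (s ∩ E) := by
        rw [hcond_eq, Measure.restrict_smul, Measure.restrict_restrict hs0]
      rw [show ∫ x in s, φ (Z x) ∂(ℙ[|E]) = ∫ x, φ (Z x) ∂((ℙ[|E]).restrict s) from rfl,
        show ∫ x in s, f x ∂(ℙ[|E]) = ∫ x, f x ∂((ℙ[|E]).restrict s) from rfl,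
        hres, integral_smul_measure, integral_smul_measure]
      congr 1
      calc ∫ x, φ (Z x) ∂((ℙ : Measure Ω).restrict (s ∩ E))
          = ∫ x, ψ x ∂((ℙ : Measure Ω).restrict (s ∩ E)) :=
            integral_congr_ae (Filter.Eventually.of_forall fun x => hφψ x)
        _ = ∫ x, f x ∂((ℙ : Measure Ω).restrict (s ∩ E)) := hmain s hs
    have hφZ_meas : AEStronglyMeasurable[mz Z] (fun ω => φ (Z ω)) (ℙ[|E]) :=
      (Measurable.stronglyMeasurable (hφ.comp hZm)).aestronglyMeasurable
    exact (ae_eq_condExp_of_forall_setIntegral_eq hm hint_cond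
      (fun s _ _ => hφZ_cond.integrableOn) hg_eq hφZ_meas).symm
  refine ⟨φ, hφ, ?_, ?_⟩
  · exact claim A hAmeas hA0 htower
  · rw [hA1c]
    exact claim Aᶜ hAmeas.compl hAc0 htowerc
end

section
/- Fix a coordinate i with P(R_i = 0) > 0, and let g_i be a square-integrable function of (X_obs, R_{¬i}). Define its projection onto observed covariates g_i^proj(X_obs) := E[ g_i(X_obs, R_{¬i}) | X_obs, R_i = 0 ]. Under the MAR assumption, the cross term vanishes: E[ (g_i(X_obs, R_{¬i}) − g_i^proj(X_obs)) · (g_i^proj(X_obs) − X_i) | R_i = 0 ] = 0. -/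
open MeasureTheory ProbabilityTheory
open scoped ProbabilityTheory ENNReal

section Aux
variable {Ω : Type*} {m mΩ : MeasurableSpace Ω} {μ : Measure Ω} [IsProbabilityMeasure μ]

lemma mul_integrable_of_memℒp_two {f g : Ω → ℝ} (hf : MemLp f 2 μ) (hg : MemLp g 2 μ) :
    Integrable (fun ω => f ω * g ω) μ := by
  refine Integrable.mono' (((hf.integrable_sq.add hg.integrable_sq)).div_const 2)
    (hf.1.mul hg.1) ?_
  filter_upwards with ω
  simp only [Pi.add_apply, Real.norm_eq_abs, abs_mul]
  nlinarith [abs_nonneg (f ω), abs_nonneg (g ω), sq_abs (f ω), sq_abs (g ω),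
    sq_nonneg (|f ω| - |g ω|)]

lemma memℒp_two_condexp (hm : m ≤ mΩ) {f : Ω → ℝ}
    (hf : MemLp f 2 μ) : MemLp (μ[f|m]) 2 μ := by
  have h2 : (condExpL2 ℝ ℝ hm (hf.toLp f) : Ω → ℝ) =ᵐ[μ] μ[f|m] := by
    refine ae_eq_condExp_of_forall_setIntegral_eq hm (hf.integrable one_le_two) ?_ ?_ ?_
    · intro s hs hμs
      exact integrableOn_condExpL2_of_measure_ne_top hm hμs.ne _
    · intro s hs hμs
      rw [integral_condExpL2_eq (𝕜 := ℝ) hm (hf.toLp f) hs hμs.ne]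
      exact integral_congr_ae (ae_restrict_of_ae hf.coeFn_toLp)
    · exact lpMeas.aestronglyMeasurable _
  exact (Lp.memLp _).ae_eq h2

variable [StandardBorelSpace Ω] [Nonempty Ω]

/-- key product identity: under fiberwise independence (tested on rational `Iic` sets),
`E[1_B · X | m] = E[1_B | m] · E[X | m]`. -/
lemma condexp_indicator_mul_of_kernel_indep (hm : m ≤ mΩ)
    {X : Ω → ℝ} (hX : Measurable X) (hXint : Integrable X μ)
    {B : Set Ω} (hB : MeasurableSet B)
    (hind : ∀ q : ℚ, ∀ᵐ ω ∂μ, condExpKernel μ m ω (X ⁻¹' Set.Iic (q : ℝ) ∩ B)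
      = condExpKernel μ m ω (X ⁻¹' Set.Iic (q : ℝ)) * condExpKernel μ m ω B) :
    μ[B.indicator X | m] =ᵐ[μ] fun ω => ((μ⟦B | m⟧) ω) * (μ[X|m]) ω := by
  have h1 : μ[B.indicator X | m] =ᵐ[μ] fun ω => ∫ y, B.indicator X y ∂(condExpKernel μ m ω) :=
    condExp_ae_eq_integral_condExpKernel hm (hXint.indicator hB)
  have h2 : μ[X|m] =ᵐ[μ] fun ω => ∫ y, X y ∂(condExpKernel μ m ω) :=
    condExp_ae_eq_integral_condExpKernel hm hXint
  have h3 : (fun ω => (condExpKernel μ m ω B).toReal) =ᵐ[μ] μ⟦B|m⟧ :=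
    condExpKernel_ae_eq_condExp hm hB
  have h4 : ∀ᵐ ω ∂μ, Integrable X (condExpKernel μ m ω) := hXint.condExpKernel_ae
  have h5 : ∀ᵐ ω ∂μ, ∀ q : ℚ, condExpKernel μ m ω (X ⁻¹' Set.Iic (q : ℝ) ∩ B)
      = condExpKernel μ m ω (X ⁻¹' Set.Iic (q : ℝ)) * condExpKernel μ m ω B :=
    ae_all_iff.mpr hind
  filter_upwards [h1, h2, h3, h4, h5] with ω hω1 hω2 hω3 hω4 hω5
  rw [hω1, hω2, ← hω3]
  set κ := condExpKernel μ m ω with hκ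
  haveI : IsFiniteMeasure (κ B • κ.map X) := by
    constructor
    rw [Measure.smul_apply, smul_eq_mul]
    exact ENNReal.mul_lt_top (measure_lt_top _ _) (measure_lt_top _ _)
  have hmeq : (κ.restrict B).map X = κ B • κ.map X := by
    refine MeasureTheory.ext_of_generate_finite _
      (BorelSpace.measurable_eq.trans Real.borel_eq_generateFrom_Iic_rat)
      Real.isPiSystem_Iic_rat ?_ ?_
    · rintro s hs
      simp only [Set.mem_iUnion, Set.mem_singleton_iff] at hs
      obtain ⟨q, rfl⟩ := hs
      rw [Measure.map_apply hX measurableSet_Iic,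
        Measure.restrict_apply (hX measurableSet_Iic), Measure.smul_apply,
        Measure.map_apply hX measurableSet_Iic, smul_eq_mul, hω5 q, mul_comm]
    · rw [Measure.map_apply hX MeasurableSet.univ, Set.preimage_univ,
        Measure.restrict_apply MeasurableSet.univ, Set.univ_inter,
        Measure.smul_apply, Measure.map_apply hX MeasurableSet.univ, Set.preimage_univ,
        measure_univ, smul_eq_mul, mul_one]
  have e1 : ∫ y, B.indicator X y ∂κ = ∫ y in B, X y ∂κ := integral_indicator hB
  have e2 : ∫ y in B, X y ∂κ = ∫ x, x ∂((κ.restrict B).map X) :=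
    (integral_map hX.aemeasurable aestronglyMeasurable_id).symm
  have e3 : ∫ x, x ∂(κ B • κ.map X) = (κ B).toReal • ∫ x, x ∂(κ.map X) :=
    integral_smul_measure _ _
  have e4 : ∫ x, x ∂(κ.map X) = ∫ y, X y ∂κ :=
    integral_map hX.aemeasurable aestronglyMeasurable_id
  rw [e1, e2, hmeq, e3, e4, smul_eq_mul]

end Aux


lemma condexp_sup_eq_of_indicator_mul {Ω δ : Type*} {m m₂ : MeasurableSpace Ω}
    [mΩ : MeasurableSpace Ω] [MeasurableSpace δ] {μ : Measure Ω} [IsProbabilityMeasure μ]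
    {R : Ω → δ} (hR : Measurable R) (hm : m ≤ mΩ)
    (hm₂def : m₂ = m ⊔ MeasurableSpace.comap R inferInstance)
    {X : Ω → ℝ} (hXint : Integrable X μ)
    (hkey : ∀ t : Set δ, MeasurableSet t →
      μ[(R ⁻¹' t).indicator X | m] =ᵐ[μ] fun ω => ((μ⟦R ⁻¹' t | m⟧) ω) * (μ[X|m]) ω) :
    μ[X | m₂] =ᵐ[μ] μ[X | m] := by
  have hm₂ : m₂ ≤ mΩ := hm₂def ▸ sup_le hm hR.comap_le
  refine (ae_eq_condExp_of_forall_setIntegral_eq hm₂ hXint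
    (fun s _ _ => integrable_condExp.integrableOn) ?_ ?_).symm
  swap
  · exact AEStronglyMeasurable.mono (hm₂def ▸ le_sup_left)
      stronglyMeasurable_condExp.aestronglyMeasurable
  have h_eq : m₂ = MeasurableSpace.generateFrom
      {s : Set Ω | ∃ a, MeasurableSet[m] a ∧ ∃ t, MeasurableSet t ∧ s = a ∩ R ⁻¹' t} := by
    rw [hm₂def]
    refine le_antisymm (sup_le ?_ ?_) (MeasurableSpace.generateFrom_le ?_)
    · intro a ha
      exact MeasurableSpace.measurableSet_generateFrom
        ⟨a, ha, Set.univ, MeasurableSet.univ, by simp⟩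
    · rintro s ⟨t, ht, rfl⟩
      exact MeasurableSpace.measurableSet_generateFrom
        ⟨Set.univ, MeasurableSet.univ, t, ht, by simp⟩
    · rintro s ⟨a, ha, t, ht, rfl⟩
      exact ((le_sup_left (a := m) (b := MeasurableSpace.comap R inferInstance)) a ha).inter
        ((le_sup_right (a := m) (b := MeasurableSpace.comap R inferInstance)) _ ⟨t, ht, rfl⟩)
  have h_pi : IsPiSystem
      {s : Set Ω | ∃ a, MeasurableSet[m] a ∧ ∃ t, MeasurableSet t ∧ s = a ∩ R ⁻¹' t} := by
    rintro s ⟨a, ha, t, ht, rfl⟩ s' ⟨a', ha', t', ht', rfl⟩ -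
    exact ⟨a ∩ a', ha.inter ha', t ∩ t', ht.inter ht', by rw [Set.preimage_inter]; ac_rfl⟩
  have main : ∀ s : Set Ω, MeasurableSet[m₂] s →
      ∫ x in s, (μ[X|m]) x ∂μ = ∫ x in s, X x ∂μ := by
    refine @MeasurableSpace.induction_on_inter Ω m₂
      (fun s _ => ∫ x in s, (μ[X|m]) x ∂μ = ∫ x in s, X x ∂μ) _ h_eq h_pi ?_ ?_ ?_ ?_
    · simp
    · rintro s ⟨a, ha, t, ht, rfl⟩
      have hBmeas : MeasurableSet (R ⁻¹' t) := hR ht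
      have hrhs : ∫ x in a ∩ R ⁻¹' t, X x ∂μ
          = ∫ x in a, ((μ⟦R ⁻¹' t | m⟧) x) * (μ[X|m]) x ∂μ := by
        rw [← setIntegral_indicator hBmeas,
          ← setIntegral_condExp hm (hXint.indicator hBmeas) ha]
        exact setIntegral_congr_ae (hm a ha) ((hkey t ht).mono fun x hx _ => hx)
      have hid : (R ⁻¹' t).indicator (μ[X|m])
          = μ[X|m] * (R ⁻¹' t).indicator (fun _ => (1:ℝ)) := by
        funext ω
        by_cases hω : ω ∈ R ⁻¹' t <;> simp [Set.indicator_apply, hω]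
      have hpull : μ[(R ⁻¹' t).indicator (μ[X|m]) | m]
          =ᵐ[μ] fun ω => ((μ⟦R ⁻¹' t | m⟧) ω) * (μ[X|m]) ω := by
        have hint1 : Integrable ((R ⁻¹' t).indicator (fun _ => (1:ℝ))) μ :=
          (integrable_const (1:ℝ)).indicator hBmeas
        have hintprod : Integrable ((μ[X|m]) * (R ⁻¹' t).indicator (fun _ => (1:ℝ))) μ := by
          rw [← hid]; exact integrable_condExp.indicator hBmeas
        rw [hid]
        refine (condExp_mul_of_stronglyMeasurable_left (μ := μ) stronglyMeasurable_condExp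
          hintprod hint1).trans ?_
        filter_upwards [] with ω
        simp only [Pi.mul_apply]
        exact mul_comm _ _
      have hlhs : ∫ x in a ∩ R ⁻¹' t, (μ[X|m]) x ∂μ
          = ∫ x in a, ((μ⟦R ⁻¹' t | m⟧) x) * (μ[X|m]) x ∂μ := by
        rw [← setIntegral_indicator hBmeas,
          ← setIntegral_condExp hm (integrable_condExp.indicator hBmeas) ha]
        exact setIntegral_congr_ae (hm a ha) (hpull.mono fun x hx _ => hx)
      rw [hlhs, hrhs]
    · intro s hs hind
      have h1 := integral_add_compl (hm₂ s hs) (integrable_condExp : Integrable (μ[X|m]) μ)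
      have h2 := integral_add_compl (hm₂ s hs) hXint
      have h3 : ∫ x, (μ[X|m]) x ∂μ = ∫ x, X x ∂μ := integral_condExp hm
      linarith
    · intro f hdisj hfm hind
      rw [integral_iUnion (fun i => hm₂ _ (hfm i)) hdisj integrable_condExp.integrableOn,
        integral_iUnion (fun i => hm₂ _ (hfm i)) hdisj hXint.integrableOn]
      exact tsum_congr hind
  exact fun s hs _ => main s hs


set_option maxHeartbeats 1000000 in
/-- Fix a coordinate `i` with `P(Rᵢ = 0) > 0` and let `gᵢ` be a
square-integrable function of `(X_obs, R_{¬i})`. Let `gᵢ^proj(X_obs) := E[gᵢ | X_obs, Rᵢ = 0]`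
be its projection onto the observed covariates. Under the MAR assumption
(`Xᵢ ⟂⟂ R_{¬i} | X_obs` conditionally on `Rᵢ = 0`), the cross term vanishes:
`E[(gᵢ(X_obs, R_{¬i}) − gᵢ^proj(X_obs)) (gᵢ^proj(X_obs) − Xᵢ) | Rᵢ = 0] = 0`. -/
theorem projection_cross_term_vanishes
    {Ω γ δ : Type*} [MeasureSpace Ω] [IsProbabilityMeasure (ℙ : Measure Ω)]
    [StandardBorelSpace Ω] [Nonempty Ω] [MeasurableSpace γ] [MeasurableSpace δ]
    (Xi : Ω → ℝ)              -- the i-th coordinate of the data vector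
    (Ri : Ω → ℝ)              -- the i-th missingness indicator
    (Xobs : Ω → γ)            -- the observed subvector X_obs
    (Rni : Ω → δ)             -- the remaining missingness indicators R_{¬i}
    (gi : γ × δ → ℝ)          -- a function of (X_obs, R_{¬i})
    (gp : γ → ℝ)              -- its projection gᵢ^proj onto the observed covariates
    (hXi : Measurable Xi) (hRi : Measurable Ri) (hXobs : Measurable Xobs)
    (hRni : Measurable Rni) (hgi : Measurable gi) (hgp : Measurable gp)
    (h0 : 0 < ℙ {ω | Ri ω = 0})
    -- square integrability
    (hgiL2 : MemLp (fun ω => gi (Xobs ω, Rni ω)) 2 (ℙ[|{ω | Ri ω = 0}]))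
    (hXiL2 : MemLp Xi 2 (ℙ[|{ω | Ri ω = 0}]))
    -- gᵢ^proj is (a version of) the conditional expectation E[gᵢ | X_obs, Rᵢ = 0]
    (hproj : (fun ω => gp (Xobs ω)) =ᵐ[ℙ[|{ω | Ri ω = 0}]]
      (ℙ[|{ω | Ri ω = 0}])[fun ω => gi (Xobs ω, Rni ω) |
        MeasurableSpace.comap Xobs inferInstance])
    -- MAR: Xᵢ ⟂⟂ R_{¬i} given X_obs, conditionally on Rᵢ = 0
    (hMAR : CondIndepFun (MeasurableSpace.comap Xobs inferInstance) hXobs.comap_le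
      Xi Rni (ℙ[|{ω | Ri ω = 0}])) :
    ∫ ω, (gi (Xobs ω, Rni ω) - gp (Xobs ω)) * (gp (Xobs ω) - Xi ω)
      ∂(ℙ[|{ω | Ri ω = 0}]) = 0 := by
  set μ : Measure Ω := ℙ[|{ω | Ri ω = 0}] with hμdef
  haveI hμprob : IsProbabilityMeasure μ := cond_isProbabilityMeasure h0.ne'
  set g : Ω → ℝ := fun ω => gi (Xobs ω, Rni ω) with hgdef
  set gpX : Ω → ℝ := fun ω => gp (Xobs ω) with hgpXdef
  have hm : MeasurableSpace.comap Xobs inferInstance ≤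
      (inferInstance : MeasurableSpace Ω) := hXobs.comap_le
  have hm₂ : MeasurableSpace.comap Xobs inferInstance ⊔
      MeasurableSpace.comap Rni inferInstance ≤ (inferInstance : MeasurableSpace Ω) :=
    sup_le hXobs.comap_le hRni.comap_le
  -- measurability
  have hXobs_m : @Measurable Ω γ (MeasurableSpace.comap Xobs inferInstance) _ Xobs :=
    measurable_iff_comap_le.mpr le_rfl
  have hRni_m₂ : @Measurable Ω δ (MeasurableSpace.comap Xobs inferInstance ⊔
      MeasurableSpace.comap Rni inferInstance) _ Rni :=
    measurable_iff_comap_le.mpr le_sup_right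
  have hgpX_m : @Measurable Ω ℝ (MeasurableSpace.comap Xobs inferInstance) _ gpX :=
    hgp.comp hXobs_m
  have hgpX_sm : @StronglyMeasurable Ω ℝ _ (MeasurableSpace.comap Xobs inferInstance) gpX :=
    hgpX_m.stronglyMeasurable
  have hg_m₂ : @Measurable Ω ℝ (MeasurableSpace.comap Xobs inferInstance ⊔
      MeasurableSpace.comap Rni inferInstance) _ g :=
    hgi.comp ((hXobs_m.mono le_sup_left le_rfl).prodMk hRni_m₂)
  -- integrabilities
  have hgint : Integrable g μ := hgiL2.integrable one_le_two
  have hXint : Integrable Xi μ := hXiL2.integrable one_le_two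
  have hgpX2 : MemLp gpX 2 μ := (memℒp_two_condexp hm hgiL2).ae_eq hproj.symm
  have hgpXint : Integrable gpX μ := hgpX2.integrable one_le_two
  have hcond2 : MemLp (μ[Xi | MeasurableSpace.comap Xobs inferInstance]) 2 μ :=
    memℒp_two_condexp hm hXiL2
  -- MAR gives the key product identity for indicators of `Rni`-measurable sets
  have hkey : ∀ t : Set δ, MeasurableSet t →
      μ[(Rni ⁻¹' t).indicator Xi | MeasurableSpace.comap Xobs inferInstance] =ᵐ[μ]
        fun ω => ((μ⟦Rni ⁻¹' t | MeasurableSpace.comap Xobs inferInstance⟧) ω) *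
          ((μ[Xi | MeasurableSpace.comap Xobs inferInstance]) ω) := by
    intro t ht
    refine condexp_indicator_mul_of_kernel_indep hm hXi hXint (hRni ht) ?_
    intro q
    exact ae_of_ae_trim hm
      (hMAR (Xi ⁻¹' Set.Iic (q : ℝ)) (Rni ⁻¹' t)
        ⟨Set.Iic (q : ℝ), measurableSet_Iic, rfl⟩ ⟨t, ht, rfl⟩)
  -- tower property across the sup σ-algebra
  have htower : μ[Xi | MeasurableSpace.comap Xobs inferInstance ⊔
      MeasurableSpace.comap Rni inferInstance] =ᵐ[μ]
      μ[Xi | MeasurableSpace.comap Xobs inferInstance] :=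
    condexp_sup_eq_of_indicator_mul hRni hm rfl hXint hkey
  -- notations
  have hψ2 : MemLp (fun ω => g ω - gpX ω) 2 μ := hgiL2.sub hgpX2
  have hψ_sm₂ : @StronglyMeasurable Ω ℝ _ (MeasurableSpace.comap Xobs inferInstance ⊔
      MeasurableSpace.comap Rni inferInstance) (fun ω => g ω - gpX ω) :=
    (hg_m₂.sub (hgpX_m.mono le_sup_left le_rfl)).stronglyMeasurable
  -- Step 1: replace `Xi` by its conditional expectation given `X_obs`
  have hb : ∫ ω, (g ω - gpX ω) * Xi ω ∂μ
      = ∫ ω, (g ω - gpX ω) * (μ[Xi | MeasurableSpace.comap Xobs inferInstance]) ω ∂μ := by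
    have hintprod : Integrable ((fun ω => g ω - gpX ω) * Xi) μ :=
      mul_integrable_of_memℒp_two hψ2 hXiL2
    have hpull := condExp_mul_of_stronglyMeasurable_left (μ := μ) hψ_sm₂ hintprod hXint
    calc ∫ ω, (g ω - gpX ω) * Xi ω ∂μ
        = ∫ ω, (μ[(fun ω => g ω - gpX ω) * Xi | MeasurableSpace.comap Xobs inferInstance ⊔
            MeasurableSpace.comap Rni inferInstance]) ω ∂μ := (integral_condExp hm₂).symm
      _ = ∫ ω, (g ω - gpX ω) * (μ[Xi | MeasurableSpace.comap Xobs inferInstance]) ω ∂μ := by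
          refine integral_congr_ae (hpull.trans ?_)
          filter_upwards [htower] with ω hω
          simp only [Pi.mul_apply, hω]
  -- Step 2: the conditional expectation of `g - gpX` given `X_obs` vanishes
  have hψcond0 : μ[(fun ω => g ω - gpX ω) | MeasurableSpace.comap Xobs inferInstance]
      =ᵐ[μ] 0 := by
    have hsub := condExp_sub (m := MeasurableSpace.comap Xobs inferInstance) hgint hgpXint
    have hfix : μ[gpX | MeasurableSpace.comap Xobs inferInstance] = gpX :=
      condExp_of_stronglyMeasurable hm hgpX_sm hgpXint
    refine hsub.trans ?_
    filter_upwards [hproj] with ω hω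
    simp only [Pi.sub_apply, hfix, Pi.zero_apply]
    rw [← hω, sub_self]
  -- Step 3: orthogonality
  have hd : ∫ ω, (gpX ω - (μ[Xi | MeasurableSpace.comap Xobs inferInstance]) ω) *
      (g ω - gpX ω) ∂μ = 0 := by
    have hsm : @StronglyMeasurable Ω ℝ _ (MeasurableSpace.comap Xobs inferInstance)
        (fun ω => gpX ω - (μ[Xi | MeasurableSpace.comap Xobs inferInstance]) ω) :=
      hgpX_sm.sub stronglyMeasurable_condExp
    have hintprod : Integrable ((fun ω => gpX ω -
        (μ[Xi | MeasurableSpace.comap Xobs inferInstance]) ω) * (fun ω => g ω - gpX ω)) μ :=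
      mul_integrable_of_memℒp_two (hgpX2.sub hcond2) hψ2
    have hpull := condExp_mul_of_stronglyMeasurable_left (μ := μ) hsm hintprod
      (hgint.sub hgpXint)
    calc ∫ ω, (gpX ω - (μ[Xi | MeasurableSpace.comap Xobs inferInstance]) ω) *
          (g ω - gpX ω) ∂μ
        = ∫ ω, (μ[(fun ω => gpX ω - (μ[Xi | MeasurableSpace.comap Xobs inferInstance]) ω) *
            (fun ω => g ω - gpX ω) | MeasurableSpace.comap Xobs inferInstance]) ω ∂μ :=
          (integral_condExp hm).symm
      _ = ∫ ω, (0:ℝ) ∂μ := by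
          refine integral_congr_ae (hpull.trans ?_)
          filter_upwards [hψcond0] with ω hω
          simp only [Pi.mul_apply, hω, Pi.zero_apply, mul_zero]
      _ = 0 := integral_zero _ _
  -- assemble
  have hsplit : ∫ ω, (g ω - gpX ω) * (gpX ω - Xi ω) ∂μ
      = ∫ ω, (g ω - gpX ω) * gpX ω ∂μ - ∫ ω, (g ω - gpX ω) * Xi ω ∂μ := by
    rw [← integral_sub (mul_integrable_of_memℒp_two hψ2 hgpX2)
      (mul_integrable_of_memℒp_two hψ2 hXiL2)]
    exact integral_congr_ae (Filter.Eventually.of_forall fun ω => by ring)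
  have hsplit2 : ∫ ω, (g ω - gpX ω) * gpX ω ∂μ
      - ∫ ω, (g ω - gpX ω) * (μ[Xi | MeasurableSpace.comap Xobs inferInstance]) ω ∂μ
      = ∫ ω, (gpX ω - (μ[Xi | MeasurableSpace.comap Xobs inferInstance]) ω) *
          (g ω - gpX ω) ∂μ := by
    rw [← integral_sub (mul_integrable_of_memℒp_two hψ2 hgpX2)
      (mul_integrable_of_memℒp_two hψ2 hcond2)]
    exact integral_congr_ae (Filter.Eventually.of_forall fun ω => by ring)
  rw [hsplit, hb, hsplit2, hd]
end

section
/- Fix a coordinate i with P(R_i = 0) > 0. Let G_i be a class of square-integrable functions of (X_obs, R_{¬i}), J_i(g_i) := E[(g_i − X_i)² | R_i = 0], G_{i,proj} := { g_i^proj : g_i ∈ G_i } the projected class with g_i^proj(X_obs) := E[g_i | X_obs, R_i = 0], and G_{i,obs} ⊂ G_i the subclass of functions depending only on X_obs. Under the MAR assumption, if G_{i,obs} is dense in G_{i,proj} with respect to the L²(P(· | R_i = 0)) risk (i.e., for every h ∈ G_{i,proj} and ε > 0 there is g ∈ G_{i,obs} with J_i(g) ≤ J_i(h) + ε), then inf over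 G_{i,obs} of J_i = inf over G_{i,proj} of J_i = inf over G_i of J_i. -/
open MeasureTheory ProbabilityTheory
open scoped ProbabilityTheory ENNReal

section AuxiliaryLemmas
open Set

section Aux
variable {α : Type*} {m m0 : MeasurableSpace α} {μ : Measure α}

lemma memLp_two_integrable_mul [IsFiniteMeasure μ] {f g : α → ℝ}
    (hf : MemLp f 2 μ) (hg : MemLp g 2 μ) :
    Integrable (fun ω => f ω * g ω) μ := by
  have h1 : Integrable (fun ω => (f ω + g ω) ^ 2) μ := by
    simpa using (hf.add hg).integrable_sq
  have h2 := hf.integrable_sq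
  have h3 := hg.integrable_sq
  have heq : (fun ω => f ω * g ω)
      = fun ω => (((f ω + g ω) ^ 2 - f ω ^ 2) - g ω ^ 2) / 2 := by
    funext ω; ring
  rw [heq]
  exact ((h1.sub h2).sub h3).div_const 2

lemma memLp_two_condexp (hm : m ≤ m0) {μ : Measure α} [IsFiniteMeasure μ] {f : α → ℝ}
    (hf : MemLp f 2 μ) : MemLp (μ[f|m]) 2 μ := by
  have heq : (condExpL2 ℝ ℝ hm (hf.toLp f) : α → ℝ) =ᵐ[μ] μ[f|m] := by
    refine ae_eq_condExp_of_forall_setIntegral_eq hm (hf.integrable one_le_two)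
      (fun s _ hμs => integrableOn_condExpL2_of_measure_ne_top hm hμs.ne _)
      (fun s hs hμs => ?_) (aestronglyMeasurable_condExpL2 hm _)
    rw [integral_condExpL2_eq hm (hf.toLp f) hs hμs.ne]
    exact setIntegral_congr_ae (hm s hs) ((hf.coeFn_toLp).mono fun x hx _ => hx)
  exact (Lp.memLp ((condExpL2 ℝ ℝ hm (hf.toLp f) : α →₂[μ] ℝ))).ae_eq heq

lemma integral_mul_condexp (hm : m ≤ m0) {μ : Measure α} [IsFiniteMeasure μ] {H f : α → ℝ}
    (hH : StronglyMeasurable[m] H) (hHL2 : MemLp H 2 μ) (hfL2 : MemLp f 2 μ) :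
    ∫ ω, H ω * f ω ∂μ = ∫ ω, H ω * (μ[f|m]) ω ∂μ := by
  have hfint : Integrable f μ := hfL2.integrable one_le_two
  have hmul : Integrable (H * f) μ := memLp_two_integrable_mul hHL2 hfL2
  calc ∫ ω, H ω * f ω ∂μ = ∫ ω, (μ[H * f|m]) ω ∂μ := (integral_condExp hm).symm
    _ = ∫ ω, (H * μ[f|m]) ω ∂μ :=
        integral_congr_ae (condExp_mul_of_stronglyMeasurable_left hH hmul hfint)
    _ = ∫ ω, H ω * (μ[f|m]) ω ∂μ := rfl

end Aux

lemma proj_risk_le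
    {Ω γ δ : Type*} {mΩ : MeasurableSpace Ω} [StandardBorelSpace Ω] [Nonempty Ω]
    {mγ : MeasurableSpace γ} {mδ : MeasurableSpace δ}
    (μ : Measure Ω) [IsProbabilityMeasure μ]
    {Xi : Ω → ℝ} {Xobs : Ω → γ} {Rni : Ω → δ}
    (hXi : Measurable Xi) (hXobs : Measurable Xobs) (hRni : Measurable Rni)
    (hXiL2 : MemLp Xi 2 μ)
    (hMAR : CondIndepFun (MeasurableSpace.comap Xobs inferInstance) hXobs.comap_le Xi Rni μ)
    (hcondeq : μ[Xi | MeasurableSpace.comap (fun ω => (Xobs ω, Rni ω)) inferInstance]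
      =ᵐ[μ] μ[Xi | MeasurableSpace.comap Xobs inferInstance])
    {g : γ × δ → ℝ} (hgm : Measurable g)
    (hgL2 : MemLp (fun ω => g (Xobs ω, Rni ω)) 2 μ)
    {p : γ → ℝ} (hpm : Measurable p)
    (hp : (fun ω => p (Xobs ω)) =ᵐ[μ]
      μ[fun ω => g (Xobs ω, Rni ω) | MeasurableSpace.comap Xobs inferInstance]) :
    ∫ ω, (p (Xobs ω) - Xi ω) ^ 2 ∂μ ≤ ∫ ω, (g (Xobs ω, Rni ω) - Xi ω) ^ 2 ∂μ := by
  have hm₁ : MeasurableSpace.comap Xobs inferInstance ≤ mΩ := hXobs.comap_le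
  have hm₂ : MeasurableSpace.comap (fun ω => (Xobs ω, Rni ω)) inferInstance ≤ mΩ :=
    (hXobs.prodMk hRni).comap_le
  have hGmeas₂ : StronglyMeasurable[MeasurableSpace.comap (fun ω => (Xobs ω, Rni ω))
      inferInstance] (fun ω => g (Xobs ω, Rni ω)) := by
    refine Measurable.stronglyMeasurable ?_
    exact hgm.comp (Measurable.of_comap_le le_rfl)
  have hPm1 : StronglyMeasurable[MeasurableSpace.comap Xobs inferInstance]
      (fun ω => p (Xobs ω)) := by
    refine Measurable.stronglyMeasurable ?_
    exact hpm.comp (Measurable.of_comap_le le_rfl)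
  have hPL2 : MemLp (fun ω => p (Xobs ω)) 2 μ :=
    (memLp_two_condexp hm₁ hgL2).ae_eq hp.symm
  have hXiInt : Integrable Xi μ := hXiL2.integrable one_le_two
  have hf₁L2 : MemLp (μ[Xi|MeasurableSpace.comap Xobs inferInstance]) 2 μ :=
    memLp_two_condexp hm₁ hXiL2
  have hGP : ∫ ω, g (Xobs ω, Rni ω) * p (Xobs ω) ∂μ
      = ∫ ω, p (Xobs ω) * p (Xobs ω) ∂μ := by
    have e1 : (fun ω => p (Xobs ω)
        * (μ[fun ω => g (Xobs ω, Rni ω)|MeasurableSpace.comap Xobs inferInstance]) ω)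
        =ᵐ[μ] fun ω => p (Xobs ω) * p (Xobs ω) := by
      filter_upwards [hp] with ω hω
      rw [← hω]
    rw [integral_congr_ae (Filter.Eventually.of_forall
      (fun ω => mul_comm (g (Xobs ω, Rni ω)) (p (Xobs ω)))),
      integral_mul_condexp hm₁ hPm1 hPL2 hgL2]
    exact integral_congr_ae e1
  have hGXi : ∫ ω, g (Xobs ω, Rni ω) * Xi ω ∂μ = ∫ ω, p (Xobs ω) * Xi ω ∂μ := by
    have e2 : (fun ω => g (Xobs ω, Rni ω)
        * (μ[Xi|MeasurableSpace.comap (fun ω => (Xobs ω, Rni ω)) inferInstance]) ω)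
        =ᵐ[μ] fun ω => g (Xobs ω, Rni ω)
          * (μ[Xi|MeasurableSpace.comap Xobs inferInstance]) ω := by
      filter_upwards [hcondeq] with ω hω
      rw [hω]
    rw [integral_mul_condexp hm₂ hGmeas₂ hgL2 hXiL2,
      integral_mul_condexp hm₁ hPm1 hPL2 hXiL2]
    rw [integral_congr_ae e2]
    calc ∫ ω, g (Xobs ω, Rni ω) * (μ[Xi|MeasurableSpace.comap Xobs inferInstance]) ω ∂μ
        = ∫ ω, (μ[Xi|MeasurableSpace.comap Xobs inferInstance]) ω * g (Xobs ω, Rni ω) ∂μ :=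
          integral_congr_ae (Filter.Eventually.of_forall fun ω => mul_comm _ _)
      _ = ∫ ω, (μ[Xi|MeasurableSpace.comap Xobs inferInstance]) ω
            * (μ[fun ω => g (Xobs ω, Rni ω)|MeasurableSpace.comap Xobs inferInstance]) ω ∂μ :=
          integral_mul_condexp hm₁ stronglyMeasurable_condExp hf₁L2 hgL2
      _ = ∫ ω, (μ[Xi|MeasurableSpace.comap Xobs inferInstance]) ω * p (Xobs ω) ∂μ := by
          refine integral_congr_ae ?_
          filter_upwards [hp] with ω hω
          rw [← hω]
      _ = ∫ ω, p (Xobs ω) * (μ[Xi|MeasurableSpace.comap Xobs inferInstance]) ω ∂μ :=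
          integral_congr_ae (Filter.Eventually.of_forall fun ω => mul_comm _ _)
  have i_GP : Integrable (fun ω => g (Xobs ω, Rni ω) * p (Xobs ω)) μ :=
    memLp_two_integrable_mul hgL2 hPL2
  have i_PP : Integrable (fun ω => p (Xobs ω) * p (Xobs ω)) μ :=
    memLp_two_integrable_mul hPL2 hPL2
  have i_GXi : Integrable (fun ω => g (Xobs ω, Rni ω) * Xi ω) μ :=
    memLp_two_integrable_mul hgL2 hXiL2
  have i_PXi : Integrable (fun ω => p (Xobs ω) * Xi ω) μ :=
    memLp_two_integrable_mul hPL2 hXiL2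
  have hcross : ∫ ω, (g (Xobs ω, Rni ω) - p (Xobs ω)) * (p (Xobs ω) - Xi ω) ∂μ = 0 := by
    have hexp : (fun ω => (g (Xobs ω, Rni ω) - p (Xobs ω)) * (p (Xobs ω) - Xi ω))
        = fun ω => (g (Xobs ω, Rni ω) * p (Xobs ω) - p (Xobs ω) * p (Xobs ω))
          - (g (Xobs ω, Rni ω) * Xi ω - p (Xobs ω) * Xi ω) := by
      funext ω; ring
    have iA : Integrable (fun ω => g (Xobs ω, Rni ω) * p (Xobs ω)
        - p (Xobs ω) * p (Xobs ω)) μ := i_GP.sub i_PP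
    have iB : Integrable (fun ω => g (Xobs ω, Rni ω) * Xi ω - p (Xobs ω) * Xi ω) μ :=
      i_GXi.sub i_PXi
    rw [hexp, integral_sub iA iB, integral_sub i_GP i_PP,
      integral_sub i_GXi i_PXi, hGP, hGXi]
    ring
  have iPXi2 : Integrable (fun ω => (p (Xobs ω) - Xi ω) ^ 2) μ := by
    simpa using (hPL2.sub hXiL2).integrable_sq
  have iGP2 : Integrable (fun ω => (g (Xobs ω, Rni ω) - p (Xobs ω)) ^ 2) μ := by
    simpa using (hgL2.sub hPL2).integrable_sq
  have iCross : Integrable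
      (fun ω => (g (Xobs ω, Rni ω) - p (Xobs ω)) * (p (Xobs ω) - Xi ω)) μ := by
    simpa using memLp_two_integrable_mul (hgL2.sub hPL2) (hPL2.sub hXiL2)
  have hexp2 : (fun ω => (g (Xobs ω, Rni ω) - Xi ω) ^ 2)
      = fun ω => (p (Xobs ω) - Xi ω) ^ 2 + ((g (Xobs ω, Rni ω) - p (Xobs ω)) ^ 2
        + 2 * ((g (Xobs ω, Rni ω) - p (Xobs ω)) * (p (Xobs ω) - Xi ω))) := by
    funext ω; ring
  have hsplit : ∫ ω, (g (Xobs ω, Rni ω) - Xi ω) ^ 2 ∂μ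
      = ∫ ω, (p (Xobs ω) - Xi ω) ^ 2 ∂μ
        + (∫ ω, (g (Xobs ω, Rni ω) - p (Xobs ω)) ^ 2 ∂μ
          + 2 * ∫ ω, (g (Xobs ω, Rni ω) - p (Xobs ω)) * (p (Xobs ω) - Xi ω) ∂μ) := by
    have iC : Integrable (fun ω => 2 * ((g (Xobs ω, Rni ω) - p (Xobs ω))
        * (p (Xobs ω) - Xi ω))) μ := iCross.const_mul 2
    have iD : Integrable (fun ω => (g (Xobs ω, Rni ω) - p (Xobs ω)) ^ 2
        + 2 * ((g (Xobs ω, Rni ω) - p (Xobs ω)) * (p (Xobs ω) - Xi ω))) μ := iGP2.add iC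
    rw [hexp2, integral_add iPXi2 iD, integral_add iGP2 iC, integral_const_mul]
  have hnn : 0 ≤ ∫ ω, (g (Xobs ω, Rni ω) - p (Xobs ω)) ^ 2 ∂μ :=
    integral_nonneg fun ω => sq_nonneg _
  rw [hsplit, hcross]
  linarith

lemma kernel_setIntegral_eq_of_condIndepFun
    {Ω γ δ : Type*} {mΩ : MeasurableSpace Ω} [StandardBorelSpace Ω] [Nonempty Ω]
    {mγ : MeasurableSpace γ} {mδ : MeasurableSpace δ}
    (μ : Measure Ω) [IsProbabilityMeasure μ]
    {Xi : Ω → ℝ} {Xobs : Ω → γ} {Rni : Ω → δ}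
    (hXi : Measurable Xi) (hXobs : Measurable Xobs) (hRni : Measurable Rni)
    (hMAR : CondIndepFun (MeasurableSpace.comap Xobs inferInstance) hXobs.comap_le Xi Rni μ)
    (T : Set δ) (hT : MeasurableSet T) : ∀ᵐ ω ∂μ,
      ∫ x in Rni ⁻¹' T, Xi x
          ∂(condExpKernel μ (MeasurableSpace.comap Xobs inferInstance) ω)
        = (condExpKernel μ (MeasurableSpace.comap Xobs inferInstance) ω (Rni ⁻¹' T)).toReal
          * ∫ x, Xi x ∂(condExpKernel μ (MeasurableSpace.comap Xobs inferInstance) ω) := by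
  have hm₁ : MeasurableSpace.comap Xobs inferInstance ≤ mΩ := hXobs.comap_le
  have h_sets : ∀ q : ℚ, ∀ᵐ ω ∂μ,
      condExpKernel μ (MeasurableSpace.comap Xobs inferInstance) ω
          (Xi ⁻¹' Set.Iio (q : ℝ) ∩ Rni ⁻¹' T)
        = condExpKernel μ (MeasurableSpace.comap Xobs inferInstance) ω (Xi ⁻¹' Set.Iio (q : ℝ))
          * condExpKernel μ (MeasurableSpace.comap Xobs inferInstance) ω (Rni ⁻¹' T) := fun q =>
    ae_of_ae_trim hm₁ (hMAR _ _ ⟨Set.Iio (q : ℝ), measurableSet_Iio, rfl⟩ ⟨T, hT, rfl⟩)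
  rw [← ae_all_iff] at h_sets
  filter_upwards [h_sets] with ω hω
  set ν := condExpKernel μ (MeasurableSpace.comap Xobs inferInstance) ω with hνdef
  have hBmeas : MeasurableSet (Rni ⁻¹' T) := hRni hT
  haveI : IsFiniteMeasure ((ν.restrict (Rni ⁻¹' T)).map Xi) := by
    constructor
    rw [Measure.map_apply hXi MeasurableSet.univ, Set.preimage_univ,
      Measure.restrict_apply_univ]
    exact measure_lt_top _ _
  have hmap : (ν.restrict (Rni ⁻¹' T)).map Xi = (ν (Rni ⁻¹' T)) • ν.map Xi := by
    refine ext_of_generate_finite _ Real.borel_eq_generateFrom_Iio_rat Real.isPiSystem_Iio_rat ?_ ?_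
    · rintro s hs
      rw [Set.mem_iUnion] at hs
      obtain ⟨q, hq⟩ := hs
      rw [Set.mem_singleton_iff] at hq
      subst hq
      rw [Measure.map_apply hXi measurableSet_Iio,
        Measure.restrict_apply (hXi measurableSet_Iio), Measure.smul_apply,
        Measure.map_apply hXi measurableSet_Iio, smul_eq_mul, hω q, mul_comm]
    · rw [Measure.map_apply hXi MeasurableSet.univ, Set.preimage_univ,
        Measure.restrict_apply_univ, Measure.smul_apply,
        Measure.map_apply hXi MeasurableSet.univ, Set.preimage_univ, measure_univ,
        smul_eq_mul, mul_one]
  calc ∫ x in Rni ⁻¹' T, Xi x ∂ν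
      = ∫ y, id y ∂((ν.restrict (Rni ⁻¹' T)).map Xi) := by
        rw [integral_map hXi.aemeasurable aestronglyMeasurable_id]; rfl
    _ = ∫ y, id y ∂((ν (Rni ⁻¹' T)) • ν.map Xi) := by rw [hmap]
    _ = (ν (Rni ⁻¹' T)).toReal * ∫ y, id y ∂(ν.map Xi) := by
        rw [integral_smul_measure]; rfl
    _ = (ν (Rni ⁻¹' T)).toReal * ∫ x, Xi x ∂ν := by
        rw [integral_map hXi.aemeasurable aestronglyMeasurable_id]; rfl

lemma condexp_indicator_mul_of_condIndepFun
    {Ω γ δ : Type*} {mΩ : MeasurableSpace Ω} [StandardBorelSpace Ω] [Nonempty Ω]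
    {mγ : MeasurableSpace γ} {mδ : MeasurableSpace δ}
    (μ : Measure Ω) [IsProbabilityMeasure μ]
    {Xi : Ω → ℝ} {Xobs : Ω → γ} {Rni : Ω → δ}
    (hXi : Measurable Xi) (hXobs : Measurable Xobs) (hRni : Measurable Rni)
    (hXiInt : Integrable Xi μ)
    (hMAR : CondIndepFun (MeasurableSpace.comap Xobs inferInstance) hXobs.comap_le Xi Rni μ)
    (T : Set δ) (hT : MeasurableSet T) :
    μ[(Rni ⁻¹' T).indicator Xi | MeasurableSpace.comap Xobs inferInstance]
      =ᵐ[μ] fun ω => (μ⟦Rni ⁻¹' T | MeasurableSpace.comap Xobs inferInstance⟧) ω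
        * (μ[Xi | MeasurableSpace.comap Xobs inferInstance]) ω := by
  have hm₁ : MeasurableSpace.comap Xobs inferInstance ≤ mΩ := hXobs.comap_le
  have hBmeas : MeasurableSet (Rni ⁻¹' T) := hRni hT
  have hindint : Integrable ((Rni ⁻¹' T).indicator Xi) μ := hXiInt.indicator hBmeas
  filter_upwards [condExp_ae_eq_integral_condExpKernel hm₁ hindint,
    kernel_setIntegral_eq_of_condIndepFun μ hXi hXobs hRni hMAR T hT,
    condExpKernel_ae_eq_condExp hm₁ hBmeas,
    condExp_ae_eq_integral_condExpKernel hm₁ hXiInt] with ω h1 h2 h3 h4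
  rw [h1, integral_indicator hBmeas, h2, ← measureReal_def, h3, ← h4]

lemma condexp_comap_prod_eq_of_condIndepFun
    {Ω γ δ : Type*} {mΩ : MeasurableSpace Ω} [StandardBorelSpace Ω] [Nonempty Ω]
    {mγ : MeasurableSpace γ} {mδ : MeasurableSpace δ}
    (μ : Measure Ω) [IsProbabilityMeasure μ]
    {Xi : Ω → ℝ} {Xobs : Ω → γ} {Rni : Ω → δ}
    (hXi : Measurable Xi) (hXobs : Measurable Xobs) (hRni : Measurable Rni)
    (hXiInt : Integrable Xi μ)
    (hMAR : CondIndepFun (MeasurableSpace.comap Xobs inferInstance) hXobs.comap_le Xi Rni μ) :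
    μ[Xi | MeasurableSpace.comap (fun ω => (Xobs ω, Rni ω)) inferInstance]
      =ᵐ[μ] μ[Xi | MeasurableSpace.comap Xobs inferInstance] := by
  have hm₁ : MeasurableSpace.comap Xobs inferInstance ≤ mΩ := hXobs.comap_le
  have hm₂ : MeasurableSpace.comap (fun ω => (Xobs ω, Rni ω)) inferInstance ≤ mΩ :=
    (hXobs.prodMk hRni).comap_le
  have hm₂eq : MeasurableSpace.comap (fun ω => (Xobs ω, Rni ω)) inferInstance
      = MeasurableSpace.comap Xobs inferInstance ⊔ MeasurableSpace.comap Rni inferInstance := by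
    show MeasurableSpace.comap _ (mγ.comap Prod.fst ⊔ mδ.comap Prod.snd) = _
    rw [MeasurableSpace.comap_sup, MeasurableSpace.comap_comp, MeasurableSpace.comap_comp]
    rfl
  have hm₁₂ : MeasurableSpace.comap Xobs inferInstance
      ≤ MeasurableSpace.comap (fun ω => (Xobs ω, Rni ω)) inferInstance := by
    rw [hm₂eq]; exact le_sup_left
  have hmR₂ : MeasurableSpace.comap Rni inferInstance
      ≤ MeasurableSpace.comap (fun ω => (Xobs ω, Rni ω)) inferInstance := by
    rw [hm₂eq]; exact le_sup_right
  have hf₁int : Integrable (μ[Xi|MeasurableSpace.comap Xobs inferInstance]) μ :=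
    integrable_condExp
  have hpi : IsPiSystem {s | ∃ A, MeasurableSet[MeasurableSpace.comap Xobs inferInstance] A ∧
      ∃ T, MeasurableSet T ∧ s = A ∩ Rni ⁻¹' T} := by
    rintro s ⟨A, hA, T, hT, rfl⟩ t ⟨A', hA', T', hT', rfl⟩ -
    refine ⟨A ∩ A', hA.inter hA', T ∩ T', hT.inter hT', ?_⟩
    rw [Set.preimage_inter]
    ext x
    simp only [Set.mem_inter_iff, Set.mem_preimage]
    tauto
  have hgen : MeasurableSpace.comap (fun ω => (Xobs ω, Rni ω)) inferInstance
      = MeasurableSpace.generateFrom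
        {s | ∃ A, MeasurableSet[MeasurableSpace.comap Xobs inferInstance] A ∧
          ∃ T, MeasurableSet T ∧ s = A ∩ Rni ⁻¹' T} := by
    refine le_antisymm ?_ (MeasurableSpace.generateFrom_le ?_)
    · rw [hm₂eq]
      refine sup_le ?_ ?_
      · intro s hs
        exact MeasurableSpace.measurableSet_generateFrom
          ⟨s, hs, Set.univ, MeasurableSet.univ, by simp⟩
      · rintro s ⟨T, hT, rfl⟩
        exact MeasurableSpace.measurableSet_generateFrom
          ⟨Set.univ, MeasurableSet.univ, T, hT, by simp⟩
    · rintro s ⟨A, hA, T, hT, rfl⟩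
      exact (hm₁₂ _ hA).inter (hmR₂ _ ⟨T, hT, rfl⟩)
  -- the set-integral identity on all of `m₂`
  have hsetint : ∀ t, MeasurableSet[MeasurableSpace.comap (fun ω => (Xobs ω, Rni ω))
        inferInstance] t →
      ∫ x in t, (μ[Xi|MeasurableSpace.comap Xobs inferInstance]) x ∂μ = ∫ x in t, Xi x ∂μ := by
    intro t ht
    refine MeasurableSpace.induction_on_inter
      (m := MeasurableSpace.comap (fun ω => (Xobs ω, Rni ω)) inferInstance)
      (C := fun t _ => ∫ x in t, (μ[Xi|MeasurableSpace.comap Xobs inferInstance]) x ∂μ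
        = ∫ x in t, Xi x ∂μ)
      hgen hpi (by simp) ?_ ?_ ?_ t ht
    · -- generators
      rintro s ⟨A, hA, T, hT, rfl⟩
      have hBmeas : MeasurableSet (Rni ⁻¹' T) := hRni hT
      have e2 := condexp_indicator_mul_of_condIndepFun μ hXi hXobs hRni hXiInt hMAR T hT
      have hfuneq : (Rni ⁻¹' T).indicator (μ[Xi|MeasurableSpace.comap Xobs inferInstance])
          = (μ[Xi|MeasurableSpace.comap Xobs inferInstance])
            * (Rni ⁻¹' T).indicator (fun _ => (1 : ℝ)) := by
        funext ω
        by_cases hω : ω ∈ Rni ⁻¹' T <;> simp [hω]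
      have hint2 : Integrable ((Rni ⁻¹' T).indicator (fun _ => (1 : ℝ))) μ :=
        (integrable_const (1 : ℝ)).indicator hBmeas
      have hint1 : Integrable ((μ[Xi|MeasurableSpace.comap Xobs inferInstance])
          * (Rni ⁻¹' T).indicator (fun _ => (1 : ℝ))) μ := by
        rw [← hfuneq]; exact hf₁int.indicator hBmeas
      have e1 : μ[(Rni ⁻¹' T).indicator (μ[Xi|MeasurableSpace.comap Xobs inferInstance]) |
            MeasurableSpace.comap Xobs inferInstance]
          =ᵐ[μ] fun ω => (μ⟦Rni ⁻¹' T | MeasurableSpace.comap Xobs inferInstance⟧) ω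
            * (μ[Xi|MeasurableSpace.comap Xobs inferInstance]) ω := by
        rw [hfuneq]
        exact (condExp_mul_of_stronglyMeasurable_left stronglyMeasurable_condExp hint1 hint2).trans
          (Filter.Eventually.of_forall fun ω => mul_comm _ _)
      calc ∫ x in A ∩ Rni ⁻¹' T, (μ[Xi|MeasurableSpace.comap Xobs inferInstance]) x ∂μ
          = ∫ x in A, (Rni ⁻¹' T).indicator
              (μ[Xi|MeasurableSpace.comap Xobs inferInstance]) x ∂μ :=
            (setIntegral_indicator hBmeas).symm
        _ = ∫ x in A, (μ[(Rni ⁻¹' T).indicator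
              (μ[Xi|MeasurableSpace.comap Xobs inferInstance]) |
                MeasurableSpace.comap Xobs inferInstance]) x ∂μ :=
            (setIntegral_condExp hm₁ (hf₁int.indicator hBmeas) hA).symm
        _ = ∫ x in A, (μ[(Rni ⁻¹' T).indicator Xi |
              MeasurableSpace.comap Xobs inferInstance]) x ∂μ :=
            setIntegral_congr_ae (hm₁ _ hA)
              ((e1.trans e2.symm).mono fun ω hω _ => hω)
        _ = ∫ x in A, (Rni ⁻¹' T).indicator Xi x ∂μ :=
            setIntegral_condExp hm₁ (hXiInt.indicator hBmeas) hA
        _ = ∫ x in A ∩ Rni ⁻¹' T, Xi x ∂μ := setIntegral_indicator hBmeas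
    · -- complements
      intro t htm₂ hrec
      have htm : MeasurableSet t := hm₂ _ htm₂
      have h1 := integral_add_compl htm hf₁int
      have h2 := integral_add_compl htm hXiInt
      have h3 : ∫ x, (μ[Xi|MeasurableSpace.comap Xobs inferInstance]) x ∂μ = ∫ x, Xi x ∂μ :=
        integral_condExp hm₁
      linarith
    · -- disjoint unions
      intro f hdisj hmeas hrec
      have hmeas' : ∀ i, MeasurableSet (f i) := fun i => hm₂ _ (hmeas i)
      rw [integral_iUnion hmeas' hdisj hf₁int.integrableOn,
        integral_iUnion hmeas' hdisj hXiInt.integrableOn]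
      exact tsum_congr hrec
  have := ae_eq_condExp_of_forall_setIntegral_eq hm₂ hXiInt
    (fun s _ _ => integrable_condExp.integrableOn)
    (fun s hs _ => hsetint s hs)
    ((stronglyMeasurable_condExp.mono hm₁₂).aestronglyMeasurable)
  exact this.symm

end AuxiliaryLemmas

/-- (Equivalence of optimisation over observed covariates.) Fix a coordinate
`i` with `P(Rᵢ = 0) > 0`. Let `G_i` be a class of square-integrable functions of
`(X_obs, R_{¬i})`, `Jᵢ(gᵢ) := E[(gᵢ − Xᵢ)² | Rᵢ = 0]`,
`G_{i,proj} := { gᵢ^proj : gᵢ ∈ G_i }` and `G_{i,obs} ⊂ G_i` the subclass of functions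
depending only on `X_obs`. Under MAR, if `G_{i,obs}` is dense in `G_{i,proj}` w.r.t. the
`L²(P(·|Rᵢ=0))` risk (for every `h ∈ G_{i,proj}` and `ε > 0` there is `g ∈ G_{i,obs}` with
`Jᵢ(g) ≤ Jᵢ(h) + ε`), then
`inf_{G_{i,obs}} Jᵢ = inf_{G_{i,proj}} Jᵢ = inf_{G_i} Jᵢ`. -/
theorem inf_over_observed_class_eq
    {Ω γ δ : Type*} [MeasureSpace Ω] [IsProbabilityMeasure (ℙ : Measure Ω)]
    [StandardBorelSpace Ω] [Nonempty Ω] [MeasurableSpace γ] [MeasurableSpace δ]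
    (Xi : Ω → ℝ)              -- the i-th coordinate of the data vector
    (Ri : Ω → ℝ)              -- the i-th missingness indicator
    (Xobs : Ω → γ)            -- the observed subvector X_obs
    (Rni : Ω → δ)             -- the remaining missingness indicators R_{¬i}
    (hXi : Measurable Xi) (hRi : Measurable Ri) (hXobs : Measurable Xobs)
    (hRni : Measurable Rni)
    (h0 : 0 < ℙ {ω | Ri ω = 0})
    (hXiL2 : MemLp Xi 2 (ℙ[|{ω | Ri ω = 0}]))
    -- the model class: square-integrable measurable functions of (X_obs, R_{¬i})
    (Gi : Set (γ × δ → ℝ))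
    (hGmeas : ∀ g ∈ Gi, Measurable g)
    (hGL2 : ∀ g ∈ Gi, MemLp (fun ω => g (Xobs ω, Rni ω)) 2 (ℙ[|{ω | Ri ω = 0}]))
    -- `proj g` is (a version of) the projection g^proj = E[g | X_obs, Rᵢ = 0]
    (proj : (γ × δ → ℝ) → (γ → ℝ))
    (hprojmeas : ∀ g ∈ Gi, Measurable (proj g))
    (hproj : ∀ g ∈ Gi, (fun ω => proj g (Xobs ω)) =ᵐ[ℙ[|{ω | Ri ω = 0}]]
      (ℙ[|{ω | Ri ω = 0}])[fun ω => g (Xobs ω, Rni ω) |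
        MeasurableSpace.comap Xobs inferInstance])
    -- G_{i,obs}: the subclass of functions in G_i depending only on X_obs
    (Giobs : Set (γ → ℝ))
    (hsub : ∀ h ∈ Giobs, (fun p : γ × δ => h p.1) ∈ Gi)
    -- MAR: Xᵢ ⟂⟂ R_{¬i} given X_obs, conditionally on Rᵢ = 0
    (hMAR : CondIndepFun (MeasurableSpace.comap Xobs inferInstance) hXobs.comap_le
      Xi Rni (ℙ[|{ω | Ri ω = 0}]))
    -- density of G_{i,obs} in G_{i,proj} with respect to the L²(P(·|Rᵢ=0)) risk
    (hdense : ∀ h ∈ proj '' Gi, ∀ ε > (0 : ℝ), ∃ g ∈ Giobs,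
      ∫ ω, (g (Xobs ω) - Xi ω) ^ 2 ∂(ℙ[|{ω | Ri ω = 0}]) ≤
        ∫ ω, (h (Xobs ω) - Xi ω) ^ 2 ∂(ℙ[|{ω | Ri ω = 0}]) + ε) :
    (sInf ((fun h : γ → ℝ => ∫ ω, (h (Xobs ω) - Xi ω) ^ 2 ∂(ℙ[|{ω | Ri ω = 0}])) '' Giobs) =
      sInf ((fun h : γ → ℝ => ∫ ω, (h (Xobs ω) - Xi ω) ^ 2 ∂(ℙ[|{ω | Ri ω = 0}])) ''
        (proj '' Gi))) ∧
    (sInf ((fun h : γ → ℝ => ∫ ω, (h (Xobs ω) - Xi ω) ^ 2 ∂(ℙ[|{ω | Ri ω = 0}])) ''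
        (proj '' Gi)) =
      sInf ((fun g : γ × δ → ℝ =>
        ∫ ω, (g (Xobs ω, Rni ω) - Xi ω) ^ 2 ∂(ℙ[|{ω | Ri ω = 0}])) '' Gi)) := by
  have hs0 : (ℙ : Measure Ω) {ω | Ri ω = 0} ≠ 0 := h0.ne'
  haveI : IsProbabilityMeasure (ℙ[|{ω | Ri ω = 0}]) :=
    ProbabilityTheory.cond_isProbabilityMeasure hs0
  have hcondeq := condexp_comap_prod_eq_of_condIndepFun (ℙ[|{ω | Ri ω = 0}]) hXi hXobs hRni
    (hXiL2.integrable one_le_two) hMAR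
  -- the key inequality: projection decreases the risk
  have hkey : ∀ g ∈ Gi,
      ∫ ω, (proj g (Xobs ω) - Xi ω) ^ 2 ∂(ℙ[|{ω | Ri ω = 0}])
        ≤ ∫ ω, (g (Xobs ω, Rni ω) - Xi ω) ^ 2 ∂(ℙ[|{ω | Ri ω = 0}]) := fun g hg =>
    proj_risk_le (ℙ[|{ω | Ri ω = 0}]) hXi hXobs hRni hXiL2 hMAR hcondeq
      (hGmeas g hg) (hGL2 g hg) (hprojmeas g hg) (hproj g hg)
  -- nonnegativity and boundedness from below
  have hnn : ∀ (S : Set (γ → ℝ)) (b : ℝ),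
      b ∈ (fun h : γ → ℝ => ∫ ω, (h (Xobs ω) - Xi ω) ^ 2 ∂(ℙ[|{ω | Ri ω = 0}])) '' S →
        0 ≤ b := by
    rintro S b ⟨h, -, rfl⟩
    exact integral_nonneg fun ω => sq_nonneg _
  have hbdd : ∀ S : Set (γ → ℝ), BddBelow
      ((fun h : γ → ℝ => ∫ ω, (h (Xobs ω) - Xi ω) ^ 2 ∂(ℙ[|{ω | Ri ω = 0}])) '' S) :=
    fun S => ⟨0, fun b hb => hnn S b hb⟩
  have hbddF : BddBelow ((fun g : γ × δ → ℝ =>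
      ∫ ω, (g (Xobs ω, Rni ω) - Xi ω) ^ 2 ∂(ℙ[|{ω | Ri ω = 0}])) '' Gi) := by
    refine ⟨0, ?_⟩
    rintro b ⟨g, -, rfl⟩
    exact integral_nonneg fun ω => sq_nonneg _
  rcases Gi.eq_empty_or_nonempty with hGi | ⟨g₀, hg₀⟩
  · have hobs : Giobs = ∅ := by
      rw [Set.eq_empty_iff_forall_notMem]
      intro h hh
      have := hsub h hh
      rw [hGi] at this
      exact this
    rw [hGi, hobs]
    simp
  · have hprojne : ((fun h : γ → ℝ =>
        ∫ ω, (h (Xobs ω) - Xi ω) ^ 2 ∂(ℙ[|{ω | Ri ω = 0}])) '' (proj '' Gi)).Nonempty :=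
      ⟨_, ⟨proj g₀, ⟨g₀, hg₀, rfl⟩, rfl⟩⟩
    obtain ⟨gob₀, hgob₀, -⟩ := hdense (proj g₀) ⟨g₀, hg₀, rfl⟩ 1 one_pos
    have hobsne : ((fun h : γ → ℝ =>
        ∫ ω, (h (Xobs ω) - Xi ω) ^ 2 ∂(ℙ[|{ω | Ri ω = 0}])) '' Giobs).Nonempty :=
      ⟨_, ⟨gob₀, hgob₀, rfl⟩⟩
    have hFne : ((fun g : γ × δ → ℝ =>
        ∫ ω, (g (Xobs ω, Rni ω) - Xi ω) ^ 2 ∂(ℙ[|{ω | Ri ω = 0}])) '' Gi).Nonempty :=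
      ⟨_, ⟨g₀, hg₀, rfl⟩⟩
    -- obs ≤ proj
    have leA : sInf ((fun h : γ → ℝ =>
          ∫ ω, (h (Xobs ω) - Xi ω) ^ 2 ∂(ℙ[|{ω | Ri ω = 0}])) '' Giobs)
        ≤ sInf ((fun h : γ → ℝ =>
          ∫ ω, (h (Xobs ω) - Xi ω) ^ 2 ∂(ℙ[|{ω | Ri ω = 0}])) '' (proj '' Gi)) := by
      refine le_csInf hprojne ?_
      rintro b ⟨h, hh, rfl⟩
      refine le_of_forall_pos_le_add ?_
      intro ε hε
      obtain ⟨gob, hgob, hle⟩ := hdense h hh ε hε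
      exact (csInf_le (hbdd Giobs) ⟨gob, hgob, rfl⟩).trans hle
    -- proj ≤ obs
    have leB : sInf ((fun h : γ → ℝ =>
          ∫ ω, (h (Xobs ω) - Xi ω) ^ 2 ∂(ℙ[|{ω | Ri ω = 0}])) '' (proj '' Gi))
        ≤ sInf ((fun h : γ → ℝ =>
          ∫ ω, (h (Xobs ω) - Xi ω) ^ 2 ∂(ℙ[|{ω | Ri ω = 0}])) '' Giobs) := by
      refine le_csInf hobsne ?_
      rintro b ⟨h, hh, rfl⟩
      exact (csInf_le (hbdd (proj '' Gi))
        ⟨proj (fun p : γ × δ => h p.1), ⟨_, hsub h hh, rfl⟩, rfl⟩).trans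
        (hkey _ (hsub h hh))
    -- proj ≤ full
    have leC : sInf ((fun h : γ → ℝ =>
          ∫ ω, (h (Xobs ω) - Xi ω) ^ 2 ∂(ℙ[|{ω | Ri ω = 0}])) '' (proj '' Gi))
        ≤ sInf ((fun g : γ × δ → ℝ =>
          ∫ ω, (g (Xobs ω, Rni ω) - Xi ω) ^ 2 ∂(ℙ[|{ω | Ri ω = 0}])) '' Gi) := by
      refine le_csInf hFne ?_
      rintro b ⟨g, hg, rfl⟩
      exact (csInf_le (hbdd (proj '' Gi)) ⟨proj g, ⟨g, hg, rfl⟩, rfl⟩).trans (hkey g hg)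
    -- full ≤ proj
    have leD : sInf ((fun g : γ × δ → ℝ =>
          ∫ ω, (g (Xobs ω, Rni ω) - Xi ω) ^ 2 ∂(ℙ[|{ω | Ri ω = 0}])) '' Gi)
        ≤ sInf ((fun h : γ → ℝ =>
          ∫ ω, (h (Xobs ω) - Xi ω) ^ 2 ∂(ℙ[|{ω | Ri ω = 0}])) '' (proj '' Gi)) := by
      refine le_csInf hprojne ?_
      rintro b ⟨h, hh, rfl⟩
      refine le_of_forall_pos_le_add ?_
      intro ε hε
      obtain ⟨gob, hgob, hle⟩ := hdense h hh ε hε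
      exact (csInf_le hbddF ⟨fun p : γ × δ => gob p.1, hsub gob hgob, rfl⟩).trans hle
    exact ⟨le_antisymm leA leB, le_antisymm leC leD⟩
end

section
/- Fix a coordinate i with 0 < P(R_i = 0) < 1, let G_i be a class of measurable functions of X̃ that are square integrable under both conditional laws Law(X̃ | R_i = 0) and Law(X̃ | R_i = 1), with dP_0/dP_1 ≤ κ^{−1} almost surely for some κ > 0, and let f_i(X̃) := E[X_i | X̃]. If the model class is well specified, i.e., f_i ∈ G_i, then f_i minimises both J_i^{(0)}(g) := E[(g(X̃) − X_i)² | R_i = 0] and J_i^{(1)}(g) := E[(g(X̃) − X_i)² | R_i = 1] over G_i, and the population minimisers g_i^{*,(0)} and g_i^{*,(1)} coincide: E[ (g_i^{*,(0)}(X̃) − g_i^{*,(1)}(X̃))² | R_i = 0 ] = 0, so g_i^{*,(0)} = g_i^{*,(1)} almost surely under Law(X̃ | R_i = 0). -/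
open MeasureTheory ProbabilityTheory
open scoped ProbabilityTheory ENNReal

private lemma integrable_mul_of_memL2 {α : Type*} [MeasurableSpace α] {μ : Measure α}
    {f g : α → ℝ} (hf : MemLp f 2 μ) (hg : MemLp g 2 μ) :
    Integrable (fun x => f x * g x) μ := by
  have h : MemLp (f • g) 1 μ := hg.smul hf
  rw [memLp_one_iff_integrable] at h
  exact h

private lemma pyth_aux {Ω M : Type*} [MeasurableSpace Ω] [MeasurableSpace M]
    {μ : Measure Ω} [IsProbabilityMeasure μ] {Xt : Ω → M} (hXt : Measurable Xt)
    {Xi : Ω → ℝ} (hXiL2 : MemLp Xi 2 μ)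
    {f g : M → ℝ} (hf : Measurable f) (hg : Measurable g)
    (hfL2 : MemLp (fun ω => f (Xt ω)) 2 μ) (hgL2 : MemLp (fun ω => g (Xt ω)) 2 μ)
    (hver : (fun ω => f (Xt ω)) =ᵐ[μ] μ[Xi | MeasurableSpace.comap Xt inferInstance]) :
    ∫ ω, (g (Xt ω) - Xi ω) ^ 2 ∂μ
      = ∫ ω, (g (Xt ω) - f (Xt ω)) ^ 2 ∂μ + ∫ ω, (f (Xt ω) - Xi ω) ^ 2 ∂μ := by
  have hm : MeasurableSpace.comap Xt inferInstance ≤ ‹MeasurableSpace Ω› := hXt.comap_le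
  set a : Ω → ℝ := fun ω => g (Xt ω) with ha_def
  set b : Ω → ℝ := fun ω => f (Xt ω) with hb_def
  -- (a-b) is m-strongly-measurable
  have hXtm : Measurable[MeasurableSpace.comap Xt inferInstance] Xt := fun s hs => ⟨s, hs, rfl⟩
  have hab_m : StronglyMeasurable[MeasurableSpace.comap Xt inferInstance] (fun ω => a ω - b ω) :=
    ((hg.comp hXtm).sub (hf.comp hXtm)).stronglyMeasurable
  have habL2 : MemLp (fun ω => a ω - b ω) 2 μ := hgL2.sub hfL2
  have hbcL2 : MemLp (fun ω => b ω - Xi ω) 2 μ := hfL2.sub hXiL2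
  have hXint : Integrable Xi μ := hXiL2.integrable one_le_two
  -- cross term is zero
  have hcross : ∫ ω, (a ω - b ω) * (b ω - Xi ω) ∂μ = 0 := by
    have h1 : ∫ ω, (a ω - b ω) * Xi ω ∂μ = ∫ ω, (a ω - b ω) * (μ[Xi|MeasurableSpace.comap Xt inferInstance]) ω ∂μ := by
      have hint : Integrable ((fun ω => a ω - b ω) * Xi) μ :=
        integrable_mul_of_memL2 habL2 hXiL2
      have := integral_condExp (μ := μ) (f := (fun ω => a ω - b ω) * Xi) hm
      simp only [Pi.mul_apply] at this
      rw [← this]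
      refine integral_congr_ae ?_
      filter_upwards [condExp_mul_of_stronglyMeasurable_left hab_m hint hXint] with ω h
      simpa using h
    have h2 : ∫ ω, (a ω - b ω) * (μ[Xi|MeasurableSpace.comap Xt inferInstance]) ω ∂μ = ∫ ω, (a ω - b ω) * b ω ∂μ := by
      refine integral_congr_ae ?_
      filter_upwards [hver] with ω h
      rw [← h]
    have h3 : Integrable (fun ω => (a ω - b ω) * b ω) μ :=
      integrable_mul_of_memL2 habL2 hfL2
    have h4 : Integrable (fun ω => (a ω - b ω) * Xi ω) μ :=
      integrable_mul_of_memL2 habL2 hXiL2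
    have : ∫ ω, (a ω - b ω) * (b ω - Xi ω) ∂μ
        = ∫ ω, (a ω - b ω) * b ω ∂μ - ∫ ω, (a ω - b ω) * Xi ω ∂μ := by
      rw [← integral_sub h3 h4]
      congr 1; ext ω; ring
    rw [this, h1, h2, sub_self]
  have e1 : Integrable (fun ω => (a ω - b ω) ^ 2) μ := habL2.integrable_sq
  have e2 : Integrable (fun ω => (a ω - b ω) * (b ω - Xi ω)) μ :=
    integrable_mul_of_memL2 habL2 hbcL2
  have e3 : Integrable (fun ω => (b ω - Xi ω) ^ 2) μ := hbcL2.integrable_sq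
  have expand : ∀ ω, (a ω - Xi ω) ^ 2
      = ((a ω - b ω) ^ 2 + 2 * ((a ω - b ω) * (b ω - Xi ω))) + (b ω - Xi ω) ^ 2 := by
    intro ω; ring
  calc ∫ ω, (a ω - Xi ω) ^ 2 ∂μ
      = ∫ ω, (((a ω - b ω) ^ 2 + 2 * ((a ω - b ω) * (b ω - Xi ω))) + (b ω - Xi ω) ^ 2) ∂μ := by
        simp_rw [expand]
    _ = (∫ ω, ((a ω - b ω) ^ 2 + 2 * ((a ω - b ω) * (b ω - Xi ω))) ∂μ)
          + ∫ ω, (b ω - Xi ω) ^ 2 ∂μ := integral_add (e1.add (e2.const_mul 2)) e3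
    _ = ∫ ω, (a ω - b ω) ^ 2 ∂μ + ∫ ω, (b ω - Xi ω) ^ 2 ∂μ := by
        rw [integral_add e1 (e2.const_mul 2), integral_const_mul, hcross]
        ring

/-- (Optimisation problems are equivalent for well-specified models.) Fix a
coordinate `i` with `0 < P(Rᵢ = 0) < 1`, let `G_i` be a class of measurable functions of the
masked vector `X̃`, square integrable under both conditional laws, with `dP₀/dP₁ ≤ κ⁻¹` a.s.
for some `κ > 0`, and let `fᵢ(X̃) := E[Xᵢ | X̃]`. If the model class is well specified, i.e.
`fᵢ ∈ G_i`, then `fᵢ` minimises both `J^{(0)}` and `J^{(1)}` over `G_i`, and the population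
minimisers `g^{*,(0)}` and `g^{*,(1)}` coincide:
`E[(g^{*,(0)}(X̃) − g^{*,(1)}(X̃))² | Rᵢ = 0] = 0`, so `g^{*,(0)} = g^{*,(1)}` a.s. under
`Law(X̃ | Rᵢ = 0)`. -/
theorem population_minimisers_coincide_well_specified
    {Ω M : Type*} [MeasureSpace Ω] [IsProbabilityMeasure (ℙ : Measure Ω)]
    [MeasurableSpace M]
    (Xi : Ω → ℝ)              -- the i-th coordinate of the data vector
    (Ri : Ω → ℝ)              -- the i-th missingness indicator
    (Xt : Ω → M)              -- the masked vector X̃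
    (hXi : Measurable Xi) (hRi : Measurable Ri) (hXt : Measurable Xt)
    (hRval : ∀ ω, Ri ω = 0 ∨ Ri ω = 1)
    (h0 : 0 < ℙ {ω | Ri ω = 0}) (h1 : ℙ {ω | Ri ω = 0} < 1)
    (hXi0 : MemLp Xi 2 (ℙ[|{ω | Ri ω = 0}]))
    (hXi1 : MemLp Xi 2 (ℙ[|{ω | Ri ω = 1}]))
    (κ : ℝ) (hκ : 0 < κ)
    -- overlap: dP₀/dP₁ ≤ κ⁻¹ a.s.
    (hac : Measure.map Xt (ℙ[|{ω | Ri ω = 0}]) ≪ Measure.map Xt (ℙ[|{ω | Ri ω = 1}]))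
    (hbound : ∀ᵐ x ∂(Measure.map Xt (ℙ[|{ω | Ri ω = 1}])),
      (Measure.map Xt (ℙ[|{ω | Ri ω = 0}])).rnDeriv
          (Measure.map Xt (ℙ[|{ω | Ri ω = 1}])) x ≤ ENNReal.ofReal κ⁻¹)
    -- fᵢ(X̃) = E[Xᵢ | X̃] (a version under both conditional laws)
    (fi : M → ℝ) (hfi : Measurable fi)
    (hfi0 : (fun ω => fi (Xt ω)) =ᵐ[ℙ[|{ω | Ri ω = 0}]]
      (ℙ[|{ω | Ri ω = 0}])[Xi | MeasurableSpace.comap Xt inferInstance])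
    (hfi1 : (fun ω => fi (Xt ω)) =ᵐ[ℙ[|{ω | Ri ω = 1}]]
      (ℙ[|{ω | Ri ω = 1}])[Xi | MeasurableSpace.comap Xt inferInstance])
    -- the model class
    (Gi : Set (M → ℝ))
    (hGmeas : ∀ g ∈ Gi, Measurable g)
    (hG0 : ∀ g ∈ Gi, MemLp (fun ω => g (Xt ω)) 2 (ℙ[|{ω | Ri ω = 0}]))
    (hG1 : ∀ g ∈ Gi, MemLp (fun ω => g (Xt ω)) 2 (ℙ[|{ω | Ri ω = 1}]))
    -- well specification: fᵢ ∈ G_i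
    (hwell : fi ∈ Gi)
    -- the population risk minimisers over G_i (assumed to exist)
    (g0s g1s : M → ℝ) (hg0mem : g0s ∈ Gi) (hg1mem : g1s ∈ Gi)
    (hg0min : ∀ g ∈ Gi,
      ∫ ω, (g0s (Xt ω) - Xi ω) ^ 2 ∂(ℙ[|{ω | Ri ω = 0}]) ≤
        ∫ ω, (g (Xt ω) - Xi ω) ^ 2 ∂(ℙ[|{ω | Ri ω = 0}]))
    (hg1min : ∀ g ∈ Gi,
      ∫ ω, (g1s (Xt ω) - Xi ω) ^ 2 ∂(ℙ[|{ω | Ri ω = 1}]) ≤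
        ∫ ω, (g (Xt ω) - Xi ω) ^ 2 ∂(ℙ[|{ω | Ri ω = 1}])) :
    -- fᵢ minimises both objectives
    (∀ g ∈ Gi,
      ∫ ω, (fi (Xt ω) - Xi ω) ^ 2 ∂(ℙ[|{ω | Ri ω = 0}]) ≤
        ∫ ω, (g (Xt ω) - Xi ω) ^ 2 ∂(ℙ[|{ω | Ri ω = 0}])) ∧
    (∀ g ∈ Gi,
      ∫ ω, (fi (Xt ω) - Xi ω) ^ 2 ∂(ℙ[|{ω | Ri ω = 1}]) ≤
        ∫ ω, (g (Xt ω) - Xi ω) ^ 2 ∂(ℙ[|{ω | Ri ω = 1}])) ∧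
    -- and the two population minimisers coincide
    (∫ ω, (g0s (Xt ω) - g1s (Xt ω)) ^ 2 ∂(ℙ[|{ω | Ri ω = 0}]) = 0) ∧
    (∀ᵐ ω ∂(ℙ[|{ω | Ri ω = 0}]), g0s (Xt ω) = g1s (Xt ω)) := by
  -- both conditional measures are probability measures
  have hmeas0 : MeasurableSet {ω | Ri ω = 0} := hRi (measurableSet_singleton 0)
  have hne0 : ℙ {ω | Ri ω = 0} ≠ 0 := h0.ne'
  have hsetc : {ω | Ri ω = 1} = {ω | Ri ω = 0}ᶜ := by
    ext ω; rcases hRval ω with h | h <;> simp [h]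
  have hne1 : ℙ {ω | Ri ω = 1} ≠ 0 := by
    rw [hsetc, prob_compl_eq_one_sub hmeas0]
    exact (tsub_pos_of_lt h1).ne'
  haveI : IsProbabilityMeasure (ℙ[|{ω | Ri ω = 0}]) := cond_isProbabilityMeasure hne0
  haveI : IsProbabilityMeasure (ℙ[|{ω | Ri ω = 1}]) := cond_isProbabilityMeasure hne1
  set μ0 := (ℙ[|{ω | Ri ω = 0}]) with hμ0
  set μ1 := (ℙ[|{ω | Ri ω = 1}]) with hμ1
  have hfiL2_0 : MemLp (fun ω => fi (Xt ω)) 2 μ0 := hG0 fi hwell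
  have hfiL2_1 : MemLp (fun ω => fi (Xt ω)) 2 μ1 := hG1 fi hwell
  -- Pythagoras identities
  have key0 : ∀ g ∈ Gi, ∫ ω, (g (Xt ω) - Xi ω) ^ 2 ∂μ0
      = ∫ ω, (g (Xt ω) - fi (Xt ω)) ^ 2 ∂μ0 + ∫ ω, (fi (Xt ω) - Xi ω) ^ 2 ∂μ0 :=
    fun g hg => pyth_aux hXt hXi0 hfi (hGmeas g hg) hfiL2_0 (hG0 g hg) hfi0
  have key1 : ∀ g ∈ Gi, ∫ ω, (g (Xt ω) - Xi ω) ^ 2 ∂μ1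
      = ∫ ω, (g (Xt ω) - fi (Xt ω)) ^ 2 ∂μ1 + ∫ ω, (fi (Xt ω) - Xi ω) ^ 2 ∂μ1 :=
    fun g hg => pyth_aux hXt hXi1 hfi (hGmeas g hg) hfiL2_1 (hG1 g hg) hfi1
  have min0 : ∀ g ∈ Gi, ∫ ω, (fi (Xt ω) - Xi ω) ^ 2 ∂μ0 ≤ ∫ ω, (g (Xt ω) - Xi ω) ^ 2 ∂μ0 := by
    intro g hg
    rw [key0 g hg]
    have : (0:ℝ) ≤ ∫ ω, (g (Xt ω) - fi (Xt ω)) ^ 2 ∂μ0 :=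
      integral_nonneg fun ω => sq_nonneg _
    linarith
  have min1 : ∀ g ∈ Gi, ∫ ω, (fi (Xt ω) - Xi ω) ^ 2 ∂μ1 ≤ ∫ ω, (g (Xt ω) - Xi ω) ^ 2 ∂μ1 := by
    intro g hg
    rw [key1 g hg]
    have : (0:ℝ) ≤ ∫ ω, (g (Xt ω) - fi (Xt ω)) ^ 2 ∂μ1 :=
      integral_nonneg fun ω => sq_nonneg _
    linarith
  -- the minimisers agree a.e. with fi
  have ae_of_min : ∀ (μ : Measure Ω), ∀ _ : IsProbabilityMeasure μ,
      ∀ (g : M → ℝ), MemLp (fun ω => g (Xt ω)) 2 μ → MemLp (fun ω => fi (Xt ω)) 2 μ →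
      (∫ ω, (g (Xt ω) - Xi ω) ^ 2 ∂μ ≤ ∫ ω, (fi (Xt ω) - Xi ω) ^ 2 ∂μ) →
      (∫ ω, (g (Xt ω) - Xi ω) ^ 2 ∂μ
        = ∫ ω, (g (Xt ω) - fi (Xt ω)) ^ 2 ∂μ + ∫ ω, (fi (Xt ω) - Xi ω) ^ 2 ∂μ) →
      ∀ᵐ ω ∂μ, g (Xt ω) = fi (Xt ω) := by
    intro μ _ g hgL2 hfL2 hle hpyth
    have hD0 : ∫ ω, (g (Xt ω) - fi (Xt ω)) ^ 2 ∂μ = 0 := by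
      have hnn : (0:ℝ) ≤ ∫ ω, (g (Xt ω) - fi (Xt ω)) ^ 2 ∂μ :=
        integral_nonneg fun ω => sq_nonneg _
      linarith [hle, hpyth]
    have hint : Integrable (fun ω => (g (Xt ω) - fi (Xt ω)) ^ 2) μ :=
      (hgL2.sub hfL2).integrable_sq
    have := (integral_eq_zero_iff_of_nonneg (fun ω => sq_nonneg _) hint).mp hD0
    filter_upwards [this] with ω h
    have : (g (Xt ω) - fi (Xt ω)) ^ 2 = 0 := h
    have := pow_eq_zero_iff (n := 2) (by norm_num) |>.mp this
    linarith [this]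
  have hg0fi : ∀ᵐ ω ∂μ0, g0s (Xt ω) = fi (Xt ω) :=
    ae_of_min μ0 ‹_› g0s (hG0 g0s hg0mem) hfiL2_0 (hg0min fi hwell) (key0 g0s hg0mem)
  have hg1fi : ∀ᵐ ω ∂μ1, g1s (Xt ω) = fi (Xt ω) :=
    ae_of_min μ1 ‹_› g1s (hG1 g1s hg1mem) hfiL2_1 (hg1min fi hwell) (key1 g1s hg1mem)
  -- transfer from μ1 to μ0 via absolute continuity
  have hsmeas : MeasurableSet {x | ¬ g1s x = fi x} :=
    ((measurableSet_eq_fun (hGmeas g1s hg1mem) hfi)).compl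
  have hmap1 : Measure.map Xt μ1 {x | ¬ g1s x = fi x} = 0 := by
    rw [Measure.map_apply hXt hsmeas]
    exact hg1fi
  have hmap0 : Measure.map Xt μ0 {x | ¬ g1s x = fi x} = 0 := hac hmap1
  have hg1fi0 : ∀ᵐ ω ∂μ0, g1s (Xt ω) = fi (Xt ω) := by
    have : μ0 (Xt ⁻¹' {x | ¬ g1s x = fi x}) = 0 := by
      rw [← Measure.map_apply hXt hsmeas]; exact hmap0
    rw [ae_iff]
    convert this using 2
    rfl
  have hfinal : ∀ᵐ ω ∂μ0, g0s (Xt ω) = g1s (Xt ω) := by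
    filter_upwards [hg0fi, hg1fi0] with ω h0' h1'
    rw [h0', h1']
  refine ⟨min0, min1, ?_, hfinal⟩
  have : ∫ ω, (g0s (Xt ω) - g1s (Xt ω)) ^ 2 ∂μ0 = ∫ (_ : Ω), (0:ℝ) ∂μ0 := by
    refine integral_congr_ae ?_
    filter_upwards [hfinal] with ω h
    simp [h]
  rw [this, integral_zero]
end
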